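/- arXiv:2404.05353 — 4 statements merged into one kernel-verified Lean document; each statement's English description precedes it below -/
import Mathlib

section
/- The following hold for the subgroups of Sym(Ω), where [X,Y] denotes the commutator subgroup and MS := ⟨M,S⟩: (i) [D,T] ≤ T and [C,T] ≤ C; (ii) [V,C] = Z, [V,D] = V and [V,T] = V; (iii) [F,S] ≤ F, [V,S] ≤ V, [D,S] = T, [T,S] = 1 and [C,S] = C; (iv) [V,F] = [D,F] = [T,F] = [C,F] = 1; (v) [R,C] = [R,D] = [R,S] = [R,T] = 1, [R,V] = V and [R,A] ≤ A; (vi) [M,F] = 1, [M,V] = V and [M,S] ≤ M; (vii) MS ∩ A = MS ∩ V = 1, C ∩ A = 1 and T ∩ S = 1. -/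
open Equiv

/-! Context: `q = 3^r`, `K = F_q` a finite field with `3^r` elements, `Ω = K × K × K`,
`ε = 3^(r-1)` (so `q = 3ε`).  Permutations of `Ω` are composed left to right in the paper;
in Lean, `(g * h) x = g (h x)`, so the paper's product `g·h` corresponds to `h * g` here,
and the paper's conjugate `g⁻¹ x g` corresponds to `g * x * g⁻¹`. -/

/-- The permutation `α_{(u,v,w)} : (a,b,c) ↦ (a+u, b+v, c+w)` of `Ω = K × K × K`. -/
def alphaPerm {K : Type*} [Field K] (u v w : K) : Equiv.Perm (K × K × K) where
  toFun x := (x.1 + u, x.2.1 + v, x.2.2 + w)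
  invFun x := (x.1 - u, x.2.1 - v, x.2.2 - w)
  left_inv x := by simp
  right_inv x := by simp

/-- The permutation `β_{λ,μ} : (a,b,c) ↦ (λa, μb, (λμ)^{2ε} c)` of `Ω = K × K × K`. -/
def betaPerm {K : Type*} [Field K] (ε : ℕ) (l m : Kˣ) : Equiv.Perm (K × K × K) where
  toFun x := ((l : K) * x.1, (m : K) * x.2.1, (((l * m) ^ (2 * ε) : Kˣ) : K) * x.2.2)
  invFun x := ((l⁻¹ : Kˣ) * x.1, (m⁻¹ : Kˣ) * x.2.1, ((((l * m) ^ (2 * ε))⁻¹ : Kˣ) : K) * x.2.2)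
  left_inv x := by simp
  right_inv x := by simp

/-- The permutation `γ_e : (a,b,c) ↦ (a+eb, b, c)` of `Ω = K × K × K`. -/
def gammaPerm {K : Type*} [Field K] (e : K) : Equiv.Perm (K × K × K) where
  toFun x := (x.1 + e * x.2.1, x.2.1, x.2.2)
  invFun x := (x.1 - e * x.2.1, x.2.1, x.2.2)
  left_inv x := by simp
  right_inv x := by simp

/-- The permutation `δ : (a,b,c) ↦ (b, -a, c)` of `Ω = K × K × K`. -/
def deltaPerm (K : Type*) [Field K] : Equiv.Perm (K × K × K) where
  toFun x := (x.2.1, -x.1, x.2.2)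
  invFun x := (-x.2.1, x.1, x.2.2)
  left_inv x := by simp
  right_inv x := by simp

/-- The permutation `τ_d : (a,b,c) ↦ (a + d·b² + d^ε·c, b, c)` of `Ω = K × K × K`. -/
def tauPerm {K : Type*} [Field K] (ε : ℕ) (d : K) : Equiv.Perm (K × K × K) where
  toFun x := (x.1 + d * x.2.1 ^ 2 + d ^ ε * x.2.2, x.2.1, x.2.2)
  invFun x := (x.1 - d * x.2.1 ^ 2 - d ^ ε * x.2.2, x.2.1, x.2.2)
  left_inv x := by obtain ⟨a, b, c⟩ := x; simp; ring
  right_inv x := by obtain ⟨a, b, c⟩ := x; simp; ring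

variable (K : Type*) [Field K]

/-- `A = ⟨α_{(u,v,w)} : u,v,w ∈ F_q⟩`. -/
def Agrp : Subgroup (Equiv.Perm (K × K × K)) :=
  Subgroup.closure {g | ∃ u v w : K, g = alphaPerm u v w}

/-- `V = ⟨α_{(u,v,0)} : u,v ∈ F_q⟩`. -/
def Vgrp : Subgroup (Equiv.Perm (K × K × K)) :=
  Subgroup.closure {g | ∃ u v : K, g = alphaPerm u v 0}

/-- `F = ⟨α_{(0,0,w)} : w ∈ F_q⟩`. -/
def Fgrp : Subgroup (Equiv.Perm (K × K × K)) :=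
  Subgroup.closure {g | ∃ w : K, g = alphaPerm 0 0 w}

/-- `Z₀ = ⟨α_{(u,0,w)} : u,w ∈ F_q⟩`. -/
def Z0grp : Subgroup (Equiv.Perm (K × K × K)) :=
  Subgroup.closure {g | ∃ u w : K, g = alphaPerm u 0 w}

/-- `Z = ⟨α_{(u,0,0)} : u ∈ F_q⟩`. -/
def Zgrp : Subgroup (Equiv.Perm (K × K × K)) :=
  Subgroup.closure {g | ∃ u : K, g = alphaPerm u 0 0}

/-- `C = ⟨γ_e : e ∈ F_q⟩`. -/
def Cgrp : Subgroup (Equiv.Perm (K × K × K)) :=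
  Subgroup.closure {g | ∃ e : K, g = gammaPerm e}

/-- `R = ⟨β_{μ,μ} : μ ∈ F_q^×⟩`. -/
def Rgrp (ε : ℕ) : Subgroup (Equiv.Perm (K × K × K)) :=
  Subgroup.closure {g | ∃ μ : Kˣ, g = betaPerm ε μ μ}

/-- `S = ⟨β_{μ²,μ} : μ ∈ F_q^×⟩`. -/
def Sgrp (ε : ℕ) : Subgroup (Equiv.Perm (K × K × K)) :=
  Subgroup.closure {g | ∃ μ : Kˣ, g = betaPerm ε (μ ^ 2) μ}

/-- `T = ⟨β_{μ,μ⁻¹} : μ ∈ F_q^×⟩`. -/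
def Tgrp (ε : ℕ) : Subgroup (Equiv.Perm (K × K × K)) :=
  Subgroup.closure {g | ∃ μ : Kˣ, g = betaPerm ε μ μ⁻¹}

/-- `D = ⟨δ⟩`. -/
def Dgrp : Subgroup (Equiv.Perm (K × K × K)) :=
  Subgroup.closure {deltaPerm K}

/-- `E = ⟨τ_d : d ∈ F_q⟩`. -/
def Egrp (ε : ℕ) : Subgroup (Equiv.Perm (K × K × K)) :=
  Subgroup.closure {g | ∃ d : K, g = tauPerm ε d}

/-- `M = ⟨C, D, T⟩`. -/
def Mgrp (ε : ℕ) : Subgroup (Equiv.Perm (K × K × K)) :=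
  Cgrp K ⊔ Dgrp K ⊔ Tgrp K ε

/-- `Q = ⟨A, C⟩`. -/
def QgrpBig : Subgroup (Equiv.Perm (K × K × K)) :=
  Agrp K ⊔ Cgrp K

/-- `P = ⟨Q, E⟩`. -/
def Pgrp (ε : ℕ) : Subgroup (Equiv.Perm (K × K × K)) :=
  QgrpBig K ⊔ Egrp K ε


open scoped commutatorElement

/-! ### Auxiliary general group-theoretic helpers -/

section GroupHelpers

variable {G : Type*} [Group G] {g h h' : G}

theorem comm_eq_aux (hs : g * h = h' * g) : ⁅g, h⁆ = h' * h⁻¹ := by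
  rw [commutatorElement_def, hs]; group

theorem comm_eq2_aux (hs : g * h = h' * g) : ⁅h, g⁆ = h * h'⁻¹ := by
  rw [← commutatorElement_inv, comm_eq_aux hs, mul_inv_rev, inv_inv]

theorem conj_eq_aux (hs : g * h = h' * g) : g * h * g⁻¹ = h' := by
  rw [hs, mul_inv_cancel_right]

theorem mem_closure_self_iff {s : Set G} (h1 : (1 : G) ∈ s)
    (hmul : ∀ {a b : G}, a ∈ s → b ∈ s → a * b ∈ s)
    (hinv : ∀ {a : G}, a ∈ s → a⁻¹ ∈ s) {g : G} :
    g ∈ Subgroup.closure s ↔ g ∈ s := by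
  constructor
  · intro hg
    exact (Subgroup.closure_le (K :=
      { carrier := s, one_mem' := h1, mul_mem' := hmul, inv_mem' := hinv })).2
        le_rfl hg
  · exact fun hg => Subgroup.subset_closure hg

theorem mem_normalizer_of_aux {H : Subgroup G} (g : G)
    (h1 : ∀ x ∈ H, g * x * g⁻¹ ∈ H) (h2 : ∀ x ∈ H, g⁻¹ * x * g ∈ H) :
    g ∈ Subgroup.normalizer (H : Set G) := by
  rw [Subgroup.mem_normalizer_iff]
  intro h
  constructor
  · exact fun hh => h1 h hh
  · intro hh
    have := h2 _ hh
    simpa [mul_assoc] using this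

theorem comm_bot_of_aux {s t : Set G} (h : ∀ a ∈ s, ∀ b ∈ t, a * b = b * a) :
    ⁅Subgroup.closure s, Subgroup.closure t⁆ = ⊥ := by
  rw [eq_bot_iff, Subgroup.commutator_le]
  intro a ha b hb
  have h1 : Subgroup.closure s ≤ Subgroup.centralizer t := by
    rw [Subgroup.closure_le]
    intro a ha
    exact Subgroup.mem_centralizer_iff.2 fun b hb => (h a ha b hb).symm
  have h2 : Subgroup.closure t ≤ Subgroup.centralizer {a} := by
    rw [Subgroup.closure_le]
    intro b hb
    refine Subgroup.mem_centralizer_iff.2 ?_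
    rintro x rfl
    exact (h1 ha b hb).symm
  have hc : a * b = b * a := Subgroup.mem_centralizer_iff.1 (h2 hb) a rfl
  rw [Subgroup.mem_bot, commutatorElement_def, hc]
  group

end GroupHelpers

/-! ### Algebraic identities for the explicit permutations -/

section PermAlgebra

variable {L : Type*} [Field L]

theorem alphaPerm_mul (u v w u' v' w' : L) :
    alphaPerm u v w * alphaPerm u' v' w' = alphaPerm (u + u') (v + v') (w + w') := by
  ext x <;> simp [alphaPerm, Perm.mul_apply] <;> ring

theorem alphaPerm_zero : (alphaPerm 0 0 0 : Perm (L × L × L)) = 1 := by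
  ext x <;> simp [alphaPerm]

theorem alphaPerm_inv (u v w : L) : (alphaPerm u v w)⁻¹ = alphaPerm (-u) (-v) (-w) := by
  rw [eq_comm, eq_inv_iff_mul_eq_one, alphaPerm_mul]
  simp [alphaPerm_zero]

theorem betaPerm_mul (ε : ℕ) (l m l' m' : Lˣ) :
    betaPerm ε l m * betaPerm ε l' m' = betaPerm ε (l * l') (m * m') := by
  ext x <;> simp [betaPerm, Perm.mul_apply, mul_pow] <;> ring

theorem betaPerm_one (ε : ℕ) : (betaPerm ε 1 1 : Perm (L × L × L)) = 1 := by
  ext x <;> simp [betaPerm]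

theorem betaPerm_inv (ε : ℕ) (l m : Lˣ) :
    (betaPerm ε l m : Perm (L × L × L))⁻¹ = betaPerm ε l⁻¹ m⁻¹ := by
  rw [eq_comm, eq_inv_iff_mul_eq_one, betaPerm_mul]
  simp [betaPerm_one]

theorem gammaPerm_mul (e f : L) : gammaPerm e * gammaPerm f = gammaPerm (e + f) := by
  ext x <;> simp [gammaPerm, Perm.mul_apply] <;> ring

theorem gammaPerm_zero : (gammaPerm 0 : Perm (L × L × L)) = 1 := by
  ext x <;> simp [gammaPerm]

theorem gammaPerm_inv (e : L) : (gammaPerm e)⁻¹ = gammaPerm (-e) := by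
  rw [eq_comm, eq_inv_iff_mul_eq_one, gammaPerm_mul]; simp [gammaPerm_zero]

theorem deltaPerm_sq (ε : ℕ) : (deltaPerm L) ^ 2 = betaPerm ε (-1) (-1) := by
  ext x <;> simp [deltaPerm, betaPerm, pow_succ, Perm.mul_apply]

theorem deltaPerm_four : (deltaPerm L) ^ 4 = 1 := by
  ext x <;> simp [deltaPerm, pow_succ, Perm.mul_apply]

theorem deltaPerm_inv : (deltaPerm L)⁻¹ = (deltaPerm L) ^ 3 := by
  rw [eq_comm, eq_inv_iff_mul_eq_one, ← pow_succ]; exact deltaPerm_four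

theorem deltaPerm_pow_mod (n : ℕ) : (deltaPerm L) ^ n = (deltaPerm L) ^ (n % 4) := by
  conv_lhs => rw [← Nat.div_add_mod n 4]
  rw [pow_add, pow_mul, deltaPerm_four, one_pow, one_mul]

/-- swap lemma: `β ∘ α` -/
theorem beta_alpha_swap (ε : ℕ) (l m : Lˣ) (u v w : L) :
    betaPerm ε l m * alphaPerm u v w
      = alphaPerm ((l : L) * u) ((m : L) * v) ((((l * m) ^ (2 * ε) : Lˣ) : L) * w)
        * betaPerm ε l m := by
  ext x <;> simp [betaPerm, alphaPerm, Perm.mul_apply] <;> ring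

theorem delta_alpha_swap (u v w : L) :
    deltaPerm L * alphaPerm u v w = alphaPerm v (-u) w * deltaPerm L := by
  ext x <;> simp [deltaPerm, alphaPerm, Perm.mul_apply] <;> ring

theorem delta_sq_alpha_swap (u v w : L) :
    deltaPerm L ^ 2 * alphaPerm u v w = alphaPerm (-u) (-v) w * deltaPerm L ^ 2 := by
  ext x <;> simp [deltaPerm, alphaPerm, pow_succ, Perm.mul_apply] <;> ring

theorem delta_cube_alpha_swap (u v w : L) :
    deltaPerm L ^ 3 * alphaPerm u v w = alphaPerm (-v) u w * deltaPerm L ^ 3 := by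
  ext x <;> simp [deltaPerm, alphaPerm, pow_succ, Perm.mul_apply] <;> ring

theorem gamma_alpha_swap (e u v w : L) :
    gammaPerm e * alphaPerm u v w = alphaPerm (u + e * v) v w * gammaPerm e := by
  ext x <;> simp [gammaPerm, alphaPerm, Perm.mul_apply] <;> ring

theorem beta_gamma_swap (ε : ℕ) (l m : Lˣ) (e : L) :
    betaPerm ε l m * gammaPerm e = gammaPerm (e * (l : L) * ((m⁻¹ : Lˣ) : L)) * betaPerm ε l m := by
  ext x <;> simp [betaPerm, gammaPerm, Perm.mul_apply, mul_add] <;> ring_nf <;>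
    field_simp <;> ring

theorem delta_beta_swap (ε : ℕ) (l m : Lˣ) :
    deltaPerm L * betaPerm ε l m = betaPerm ε m l * deltaPerm L := by
  have hml : m * l = l * m := mul_comm m l
  ext x <;> simp [deltaPerm, betaPerm, Perm.mul_apply, hml] <;> ring

theorem delta_sq_beta_swap (ε : ℕ) (l m : Lˣ) :
    deltaPerm L ^ 2 * betaPerm ε l m = betaPerm ε l m * deltaPerm L ^ 2 := by
  ext x <;> simp [deltaPerm, betaPerm, pow_succ, Perm.mul_apply] <;> ring

theorem delta_cube_beta_swap (ε : ℕ) (l m : Lˣ) :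
    deltaPerm L ^ 3 * betaPerm ε l m = betaPerm ε m l * deltaPerm L ^ 3 := by
  have hml : m * l = l * m := mul_comm m l
  ext x <;> simp [deltaPerm, betaPerm, pow_succ, Perm.mul_apply, hml] <;> ring

theorem betaPerm_param_eq {ε : ℕ} {l m l' m' : Lˣ}
    (h : (betaPerm ε l m : Perm (L × L × L)) = betaPerm ε l' m') : l = l' ∧ m = m' := by
  have h1 := (Equiv.ext_iff.1 h) (1, 0, 0)
  have h2 := (Equiv.ext_iff.1 h) (0, 1, 0)
  simp [betaPerm, Prod.ext_iff] at h1 h2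
  exact ⟨Units.ext h1, Units.ext h2⟩

end PermAlgebra

/-! ### Explicit descriptions of the generated subgroups -/

section MemLemmas

variable {L : Type*} [Field L]

theorem mem_Agrp {g : Perm (L × L × L)} :
    g ∈ Agrp L ↔ ∃ u v w : L, g = alphaPerm u v w := by
  unfold Agrp
  refine mem_closure_self_iff (s := {g : Perm (L × L × L) | ∃ u v w : L, g = alphaPerm u v w}) ⟨0, 0, 0, alphaPerm_zero.symm⟩ ?_ ?_
  · rintro a b ⟨u, v, w, rfl⟩ ⟨u', v', w', rfl⟩
    exact ⟨u + u', v + v', w + w', alphaPerm_mul ..⟩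
  · rintro a ⟨u, v, w, rfl⟩
    exact ⟨-u, -v, -w, alphaPerm_inv ..⟩

theorem mem_Vgrp {g : Perm (L × L × L)} :
    g ∈ Vgrp L ↔ ∃ u v : L, g = alphaPerm u v 0 := by
  unfold Vgrp
  refine mem_closure_self_iff (s := {g : Perm (L × L × L) | ∃ u v : L, g = alphaPerm u v 0}) ⟨0, 0, alphaPerm_zero.symm⟩ ?_ ?_
  · rintro a b ⟨u, v, rfl⟩ ⟨u', v', rfl⟩
    exact ⟨u + u', v + v', by rw [alphaPerm_mul, add_zero]⟩
  · rintro a ⟨u, v, rfl⟩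
    exact ⟨-u, -v, by rw [alphaPerm_inv, neg_zero]⟩

theorem mem_Fgrp {g : Perm (L × L × L)} :
    g ∈ Fgrp L ↔ ∃ w : L, g = alphaPerm 0 0 w := by
  unfold Fgrp
  refine mem_closure_self_iff (s := {g : Perm (L × L × L) | ∃ w : L, g = alphaPerm 0 0 w}) ⟨0, alphaPerm_zero.symm⟩ ?_ ?_
  · rintro a b ⟨w, rfl⟩ ⟨w', rfl⟩
    exact ⟨w + w', by rw [alphaPerm_mul, add_zero]⟩
  · rintro a ⟨w, rfl⟩
    exact ⟨-w, by rw [alphaPerm_inv, neg_zero]⟩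

theorem mem_Zgrp {g : Perm (L × L × L)} :
    g ∈ Zgrp L ↔ ∃ u : L, g = alphaPerm u 0 0 := by
  unfold Zgrp
  refine mem_closure_self_iff (s := {g : Perm (L × L × L) | ∃ u : L, g = alphaPerm u 0 0}) ⟨0, alphaPerm_zero.symm⟩ ?_ ?_
  · rintro a b ⟨u, rfl⟩ ⟨u', rfl⟩
    exact ⟨u + u', by rw [alphaPerm_mul, add_zero]⟩
  · rintro a ⟨u, rfl⟩
    exact ⟨-u, by rw [alphaPerm_inv, neg_zero]⟩

theorem mem_Cgrp {g : Perm (L × L × L)} :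
    g ∈ Cgrp L ↔ ∃ e : L, g = gammaPerm e := by
  unfold Cgrp
  refine mem_closure_self_iff (s := {g : Perm (L × L × L) | ∃ e : L, g = gammaPerm e}) ⟨0, gammaPerm_zero.symm⟩ ?_ ?_
  · rintro a b ⟨e, rfl⟩ ⟨f, rfl⟩
    exact ⟨e + f, gammaPerm_mul ..⟩
  · rintro a ⟨e, rfl⟩
    exact ⟨-e, gammaPerm_inv ..⟩

theorem mem_Rgrp {ε : ℕ} {g : Perm (L × L × L)} :
    g ∈ Rgrp L ε ↔ ∃ μ : Lˣ, g = betaPerm ε μ μ := by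
  unfold Rgrp
  refine mem_closure_self_iff (s := {g : Perm (L × L × L) | ∃ μ : Lˣ, g = betaPerm ε μ μ}) ⟨1, (betaPerm_one ε).symm⟩ ?_ ?_
  · rintro a b ⟨μ, rfl⟩ ⟨ν, rfl⟩
    exact ⟨μ * ν, betaPerm_mul ..⟩
  · rintro a ⟨μ, rfl⟩
    exact ⟨μ⁻¹, betaPerm_inv ..⟩

theorem mem_Sgrp {ε : ℕ} {g : Perm (L × L × L)} :
    g ∈ Sgrp L ε ↔ ∃ μ : Lˣ, g = betaPerm ε (μ ^ 2) μ := by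
  unfold Sgrp
  refine mem_closure_self_iff (s := {g : Perm (L × L × L) | ∃ μ : Lˣ, g = betaPerm ε (μ ^ 2) μ}) ⟨1, by rw [one_pow, betaPerm_one]⟩ ?_ ?_
  · rintro a b ⟨μ, rfl⟩ ⟨ν, rfl⟩
    exact ⟨μ * ν, by rw [betaPerm_mul, mul_pow]⟩
  · rintro a ⟨μ, rfl⟩
    exact ⟨μ⁻¹, by rw [betaPerm_inv, inv_pow]⟩

theorem mem_Tgrp {ε : ℕ} {g : Perm (L × L × L)} :
    g ∈ Tgrp L ε ↔ ∃ μ : Lˣ, g = betaPerm ε μ μ⁻¹ := by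
  unfold Tgrp
  refine mem_closure_self_iff (s := {g : Perm (L × L × L) | ∃ μ : Lˣ, g = betaPerm ε μ μ⁻¹}) ⟨1, by rw [inv_one, betaPerm_one]⟩ ?_ ?_
  · rintro a b ⟨μ, rfl⟩ ⟨ν, rfl⟩
    exact ⟨μ * ν, by rw [betaPerm_mul, mul_inv]⟩
  · rintro a ⟨μ, rfl⟩
    exact ⟨μ⁻¹, by rw [betaPerm_inv, inv_inv]⟩

theorem mem_Dgrp {g : Perm (L × L × L)} :
    g ∈ Dgrp L ↔ ∃ n : Fin 4, g = (deltaPerm L) ^ (n : ℕ) := by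
  have h : Dgrp L = Subgroup.closure {g : Perm (L × L × L) | ∃ n : Fin 4, g = (deltaPerm L) ^ (n : ℕ)} := by
    unfold Dgrp
    apply le_antisymm
    · rw [Subgroup.closure_le]
      intro a ha
      rw [Set.mem_singleton_iff] at ha
      subst ha
      exact Subgroup.subset_closure ⟨1, by rw [Fin.val_one, pow_one]⟩
    · rw [Subgroup.closure_le]
      rintro a ⟨n, rfl⟩
      exact pow_mem (Subgroup.subset_closure (Set.mem_singleton _)) _
  rw [h]
  refine mem_closure_self_iff (s := {g : Perm (L × L × L) | ∃ n : Fin 4, g = (deltaPerm L) ^ (n : ℕ)}) ⟨(0 : Fin 4), by simp⟩ ?_ ?_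
  · rintro a b ⟨i, rfl⟩ ⟨j, rfl⟩
    refine ⟨i + j, ?_⟩
    rw [← pow_add, deltaPerm_pow_mod]
    congr 1
  · rintro a ⟨i, rfl⟩
    rcases i with ⟨iv, hi⟩
    refine ⟨⟨(4 - iv) % 4, by omega⟩, ?_⟩
    rw [inv_eq_iff_mul_eq_one, ← pow_add, deltaPerm_pow_mod]
    interval_cases iv <;> norm_num

theorem delta_mem_Dgrp : deltaPerm L ∈ Dgrp L := Subgroup.subset_closure rfl

end MemLemmas

/-! ### Commutator computations -/

section Parts

variable {L : Type*} [Field L]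

theorem alphaPerm_congr {u v w u' v' w' : L} (h1 : u = u') (h2 : v = v') (h3 : w = w') :
    alphaPerm u v w = alphaPerm u' v' w' := by subst h1 h2 h3; rfl

theorem gammaPerm_congr {e e' : L} (h : e = e') : gammaPerm e = gammaPerm e' := by subst h; rfl

theorem betaPerm_congr {ε : ℕ} {l m l' m' : Lˣ} (h1 : l = l') (h2 : m = m') :
    (betaPerm ε l m : Perm (L × L × L)) = betaPerm ε l' m' := by subst h1 h2; rfl

theorem comm_one_left {G : Type*} [Group G] (h : G) : ⁅(1 : G), h⁆ = 1 := by
  rw [commutatorElement_def]; group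

-- Part (i) : [D,T] ≤ T
theorem part_i1 (ε : ℕ) : ⁅Dgrp L, Tgrp L ε⁆ ≤ Tgrp L ε := by
  rw [Subgroup.commutator_le]
  intro d hd t ht
  rw [mem_Dgrp] at hd
  obtain ⟨⟨n, hn⟩, rfl⟩ := hd
  rw [mem_Tgrp] at ht
  obtain ⟨μ, rfl⟩ := ht
  interval_cases n
  · rw [pow_zero, comm_one_left]; exact one_mem _
  · rw [pow_one, comm_eq_aux (delta_beta_swap ε μ μ⁻¹), betaPerm_inv, betaPerm_mul]
    exact mem_Tgrp.2 ⟨μ⁻¹ * μ⁻¹, betaPerm_congr rfl (by simp)⟩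
  · rw [comm_eq_aux (delta_sq_beta_swap ε μ μ⁻¹)]
    simp only [mul_inv_cancel]
    exact one_mem _
  · rw [comm_eq_aux (delta_cube_beta_swap ε μ μ⁻¹), betaPerm_inv, betaPerm_mul]
    exact mem_Tgrp.2 ⟨μ⁻¹ * μ⁻¹, betaPerm_congr rfl (by simp)⟩

-- Part (i) : [C,T] ≤ C
theorem part_i2 (ε : ℕ) : ⁅Cgrp L, Tgrp L ε⁆ ≤ Cgrp L := by
  rw [Subgroup.commutator_le]
  intro c hc t ht
  rw [mem_Cgrp] at hc
  obtain ⟨e, rfl⟩ := hc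
  rw [mem_Tgrp] at ht
  obtain ⟨μ, rfl⟩ := ht
  rw [comm_eq2_aux (beta_gamma_swap ε μ μ⁻¹ e), gammaPerm_inv, gammaPerm_mul]
  exact mem_Cgrp.2 ⟨_, rfl⟩

-- Part (ii) : [V,C] = Z
theorem part_ii1 : ⁅Vgrp L, Cgrp L⁆ = Zgrp L := by
  apply le_antisymm
  · rw [Subgroup.commutator_le]
    intro v hv c hc
    rw [mem_Vgrp] at hv
    obtain ⟨u, v', rfl⟩ := hv
    rw [mem_Cgrp] at hc
    obtain ⟨e, rfl⟩ := hc
    rw [comm_eq2_aux (gamma_alpha_swap e u v' 0), alphaPerm_inv, alphaPerm_mul]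
    exact mem_Zgrp.2 ⟨u + -(u + e * v'), alphaPerm_congr rfl (by ring) (by ring)⟩
  · unfold Zgrp
    rw [Subgroup.closure_le]
    rintro g ⟨z, rfl⟩
    have hval : ⁅alphaPerm 0 (-z) 0, gammaPerm (1 : L)⁆ = alphaPerm z 0 0 := by
      rw [comm_eq2_aux (gamma_alpha_swap 1 0 (-z) 0), alphaPerm_inv, alphaPerm_mul]
      exact alphaPerm_congr (by ring) (by ring) (by ring)
    rw [← hval]
    exact Subgroup.commutator_mem_commutator (mem_Vgrp.2 ⟨0, -z, rfl⟩) (mem_Cgrp.2 ⟨1, rfl⟩)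

-- Part (ii) : [V,D] = V
theorem part_ii2 (h3 : (3 : L) = 0) : ⁅Vgrp L, Dgrp L⁆ = Vgrp L := by
  apply le_antisymm
  · rw [Subgroup.commutator_le]
    intro v hv d hd
    rw [mem_Vgrp] at hv
    obtain ⟨u, v', rfl⟩ := hv
    rw [mem_Dgrp] at hd
    obtain ⟨⟨n, hn⟩, rfl⟩ := hd
    interval_cases n
    · rw [pow_zero, ← commutatorElement_inv, comm_one_left, inv_one]; exact one_mem _
    · rw [pow_one, comm_eq2_aux (delta_alpha_swap u v' 0), alphaPerm_inv, alphaPerm_mul]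
      exact mem_Vgrp.2 ⟨_, _, alphaPerm_congr rfl rfl (by ring)⟩
    · rw [comm_eq2_aux (delta_sq_alpha_swap u v' 0), alphaPerm_inv, alphaPerm_mul]
      exact mem_Vgrp.2 ⟨_, _, alphaPerm_congr rfl rfl (by ring)⟩
    · rw [comm_eq2_aux (delta_cube_alpha_swap u v' 0), alphaPerm_inv, alphaPerm_mul]
      exact mem_Vgrp.2 ⟨_, _, alphaPerm_congr rfl rfl (by ring)⟩
  · unfold Vgrp
    rw [Subgroup.closure_le]
    rintro g ⟨u, v, rfl⟩
    have hval : ⁅alphaPerm (-u) (-v) 0, (deltaPerm L) ^ 2⁆ = alphaPerm u v 0 := by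
      rw [comm_eq2_aux (delta_sq_alpha_swap (-u) (-v) 0), alphaPerm_inv, alphaPerm_mul]
      exact alphaPerm_congr (by linear_combination (-u) * h3) (by linear_combination (-v) * h3)
        (by ring)
    rw [← hval]
    refine Subgroup.commutator_mem_commutator (mem_Vgrp.2 ⟨-u, -v, rfl⟩)
      (pow_mem delta_mem_Dgrp 2)

-- Part (ii) : [V,T] = V
theorem part_ii3 (ε : ℕ) (h3 : (3 : L) = 0) : ⁅Vgrp L, Tgrp L ε⁆ = Vgrp L := by
  apply le_antisymm
  · rw [Subgroup.commutator_le]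
    intro v hv t ht
    rw [mem_Vgrp] at hv
    obtain ⟨u, v', rfl⟩ := hv
    rw [mem_Tgrp] at ht
    obtain ⟨μ, rfl⟩ := ht
    rw [comm_eq2_aux (beta_alpha_swap ε μ μ⁻¹ u v' 0), alphaPerm_inv, alphaPerm_mul]
    exact mem_Vgrp.2 ⟨_, _, alphaPerm_congr rfl rfl (by ring)⟩
  · unfold Vgrp
    rw [Subgroup.closure_le]
    rintro g ⟨u, v, rfl⟩
    have hval : ⁅alphaPerm (-u) (-v) 0, betaPerm ε (-1) (-1)⁻¹⁆ = alphaPerm u v 0 := by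
      rw [comm_eq2_aux (beta_alpha_swap ε (-1) (-1)⁻¹ (-u) (-v) 0), alphaPerm_inv, alphaPerm_mul]
      refine alphaPerm_congr ?_ ?_ (by ring)
      · simp
        linear_combination (-u) * h3
      · simp
        linear_combination (-v) * h3
    rw [← hval]
    exact Subgroup.commutator_mem_commutator (mem_Vgrp.2 ⟨-u, -v, rfl⟩)
      (mem_Tgrp.2 ⟨-1, rfl⟩)

-- Part (iii) : [F,S] ≤ F
theorem part_iii1 (ε : ℕ) : ⁅Fgrp L, Sgrp L ε⁆ ≤ Fgrp L := by
  rw [Subgroup.commutator_le]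
  intro f hf s hs
  rw [mem_Fgrp] at hf
  obtain ⟨w, rfl⟩ := hf
  rw [mem_Sgrp] at hs
  obtain ⟨μ, rfl⟩ := hs
  rw [comm_eq2_aux (beta_alpha_swap ε (μ ^ 2) μ 0 0 w), alphaPerm_inv, alphaPerm_mul]
  exact mem_Fgrp.2 ⟨_, alphaPerm_congr (by ring) (by ring) rfl⟩

-- Part (iii) : [V,S] ≤ V
theorem part_iii2 (ε : ℕ) : ⁅Vgrp L, Sgrp L ε⁆ ≤ Vgrp L := by
  rw [Subgroup.commutator_le]
  intro v hv s hs
  rw [mem_Vgrp] at hv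
  obtain ⟨u, v', rfl⟩ := hv
  rw [mem_Sgrp] at hs
  obtain ⟨μ, rfl⟩ := hs
  rw [comm_eq2_aux (beta_alpha_swap ε (μ ^ 2) μ u v' 0), alphaPerm_inv, alphaPerm_mul]
  exact mem_Vgrp.2 ⟨_, _, alphaPerm_congr rfl rfl (by ring)⟩

-- Part (iii) : [D,S] = T
theorem part_iii3 (ε : ℕ) : ⁅Dgrp L, Sgrp L ε⁆ = Tgrp L ε := by
  apply le_antisymm
  · rw [Subgroup.commutator_le]
    intro d hd s hs
    rw [mem_Dgrp] at hd
    obtain ⟨⟨n, hn⟩, rfl⟩ := hd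
    rw [mem_Sgrp] at hs
    obtain ⟨μ, rfl⟩ := hs
    interval_cases n
    · rw [pow_zero, comm_one_left]; exact one_mem _
    · rw [pow_one, comm_eq_aux (delta_beta_swap ε (μ ^ 2) μ), betaPerm_inv, betaPerm_mul]
      refine mem_Tgrp.2 ⟨μ⁻¹, betaPerm_congr (by group) (by group)⟩
    · rw [comm_eq_aux (delta_sq_beta_swap ε (μ ^ 2) μ)]
      simp only [mul_inv_cancel]
      exact one_mem _
    · rw [comm_eq_aux (delta_cube_beta_swap ε (μ ^ 2) μ), betaPerm_inv, betaPerm_mul]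
      refine mem_Tgrp.2 ⟨μ⁻¹, betaPerm_congr (by group) (by group)⟩
  · unfold Tgrp
    rw [Subgroup.closure_le]
    rintro g ⟨ν, rfl⟩
    have hval : ⁅deltaPerm L, betaPerm ε (ν⁻¹ ^ 2) ν⁻¹⁆ = betaPerm ε ν ν⁻¹ := by
      rw [comm_eq_aux (delta_beta_swap ε (ν⁻¹ ^ 2) ν⁻¹), betaPerm_inv, betaPerm_mul]
      exact betaPerm_congr (by group) (by group)
    rw [← hval]
    exact Subgroup.commutator_mem_commutator delta_mem_Dgrp (mem_Sgrp.2 ⟨ν⁻¹, rfl⟩)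

-- Part (iii) : [T,S] = ⊥
theorem part_iii4 (ε : ℕ) : ⁅Tgrp L ε, Sgrp L ε⁆ = ⊥ := by
  unfold Tgrp Sgrp
  refine comm_bot_of_aux ?_
  rintro a ⟨μ, rfl⟩ b ⟨ν, rfl⟩
  rw [betaPerm_mul, betaPerm_mul, mul_comm μ (ν ^ 2), mul_comm μ⁻¹ ν]

-- Part (iii) : [C,S] = C
theorem part_iii5 (ε : ℕ) (h3 : (3 : L) = 0) : ⁅Cgrp L, Sgrp L ε⁆ = Cgrp L := by
  apply le_antisymm
  · rw [Subgroup.commutator_le]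
    intro c hc s hs
    rw [mem_Cgrp] at hc
    obtain ⟨e, rfl⟩ := hc
    rw [mem_Sgrp] at hs
    obtain ⟨μ, rfl⟩ := hs
    rw [comm_eq2_aux (beta_gamma_swap ε (μ ^ 2) μ e), gammaPerm_inv, gammaPerm_mul]
    exact mem_Cgrp.2 ⟨_, rfl⟩
  · unfold Cgrp
    rw [Subgroup.closure_le]
    rintro g ⟨f, rfl⟩
    have hval : ⁅gammaPerm (-f), betaPerm ε ((-1) ^ 2) (-1)⁆ = gammaPerm f := by
      rw [comm_eq2_aux (beta_gamma_swap ε ((-1) ^ 2) (-1) (-f)), gammaPerm_inv, gammaPerm_mul]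
      refine gammaPerm_congr ?_
      simp
      linear_combination (-f) * h3
    rw [← hval]
    exact Subgroup.commutator_mem_commutator (mem_Cgrp.2 ⟨-f, rfl⟩) (mem_Sgrp.2 ⟨-1, rfl⟩)

-- Part (iv)
theorem part_iv1 : ⁅Vgrp L, Fgrp L⁆ = ⊥ := by
  unfold Vgrp Fgrp
  refine comm_bot_of_aux ?_
  rintro a ⟨u, v, rfl⟩ b ⟨w, rfl⟩
  rw [alphaPerm_mul, alphaPerm_mul]
  exact alphaPerm_congr (by ring) (by ring) (by ring)

theorem part_iv2 : ⁅Dgrp L, Fgrp L⁆ = ⊥ := by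
  unfold Dgrp Fgrp
  refine comm_bot_of_aux ?_
  rintro a ha b ⟨w, rfl⟩
  rw [Set.mem_singleton_iff] at ha
  subst ha
  simpa using delta_alpha_swap (0 : L) 0 w

theorem part_iv3 (ε : ℕ) : ⁅Tgrp L ε, Fgrp L⁆ = ⊥ := by
  unfold Tgrp Fgrp
  refine comm_bot_of_aux ?_
  rintro a ⟨μ, rfl⟩ b ⟨w, rfl⟩
  simpa using beta_alpha_swap ε μ μ⁻¹ 0 0 w

theorem part_iv4 : ⁅Cgrp L, Fgrp L⁆ = ⊥ := by
  unfold Cgrp Fgrp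
  refine comm_bot_of_aux ?_
  rintro a ⟨e, rfl⟩ b ⟨w, rfl⟩
  simpa using gamma_alpha_swap e (0 : L) 0 w

end Parts

section PartsB

variable {L : Type*} [Field L]

theorem conj_eq_aux' {G : Type*} [Group G] {g h h' : G} (hs : g * h = h' * g) :
    g⁻¹ * h' * g = h := by
  rw [← conj_eq_aux hs]; group

theorem betaS_delta_swap (ε : ℕ) (μ : Lˣ) :
    betaPerm ε (μ ^ 2) μ * deltaPerm L
      = (deltaPerm L * betaPerm ε μ⁻¹ μ) * betaPerm ε (μ ^ 2) μ := by
  rw [mul_assoc, betaPerm_mul, show μ⁻¹ * μ ^ 2 = μ by group, (pow_two μ).symm]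
  exact (delta_beta_swap ε μ (μ ^ 2)).symm

-- Part (v)
theorem part_v1 (ε : ℕ) : ⁅Rgrp L ε, Cgrp L⁆ = ⊥ := by
  unfold Rgrp Cgrp
  refine comm_bot_of_aux ?_
  rintro a ⟨μ, rfl⟩ b ⟨e, rfl⟩
  simpa using beta_gamma_swap ε μ μ e

theorem part_v2 (ε : ℕ) : ⁅Rgrp L ε, Dgrp L⁆ = ⊥ := by
  unfold Rgrp Dgrp
  refine comm_bot_of_aux ?_
  rintro a ⟨μ, rfl⟩ b hb
  rw [Set.mem_singleton_iff] at hb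
  subst hb
  exact (delta_beta_swap ε μ μ).symm

theorem part_v3 (ε : ℕ) : ⁅Rgrp L ε, Sgrp L ε⁆ = ⊥ := by
  unfold Rgrp Sgrp
  refine comm_bot_of_aux ?_
  rintro a ⟨μ, rfl⟩ b ⟨ν, rfl⟩
  rw [betaPerm_mul, betaPerm_mul, mul_comm μ (ν ^ 2), mul_comm μ ν]

theorem part_v4 (ε : ℕ) : ⁅Rgrp L ε, Tgrp L ε⁆ = ⊥ := by
  unfold Rgrp Tgrp
  refine comm_bot_of_aux ?_
  rintro a ⟨μ, rfl⟩ b ⟨ν, rfl⟩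
  rw [betaPerm_mul, betaPerm_mul, mul_comm μ ν, mul_comm μ ν⁻¹]

theorem part_v5 (ε : ℕ) (h3 : (3 : L) = 0) : ⁅Rgrp L ε, Vgrp L⁆ = Vgrp L := by
  apply le_antisymm
  · rw [Subgroup.commutator_le]
    intro a ha b hb
    rw [mem_Rgrp] at ha
    obtain ⟨μ, rfl⟩ := ha
    rw [mem_Vgrp] at hb
    obtain ⟨u, v, rfl⟩ := hb
    rw [comm_eq_aux (beta_alpha_swap ε μ μ u v 0), alphaPerm_inv, alphaPerm_mul]
    exact mem_Vgrp.2 ⟨_, _, alphaPerm_congr rfl rfl (by ring)⟩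
  · unfold Vgrp
    rw [Subgroup.closure_le]
    rintro g ⟨u, v, rfl⟩
    have hval : ⁅(betaPerm ε (-1) (-1) : Perm (L × L × L)), alphaPerm u v 0⁆ = alphaPerm u v 0 := by
      rw [comm_eq_aux (beta_alpha_swap ε (-1) (-1) u v 0), alphaPerm_inv, alphaPerm_mul]
      refine alphaPerm_congr ?_ ?_ (by ring)
      · simp
        linear_combination (-u) * h3
      · simp
        linear_combination (-v) * h3
    rw [← hval]
    exact Subgroup.commutator_mem_commutator (mem_Rgrp.2 ⟨-1, rfl⟩) (mem_Vgrp.2 ⟨u, v, rfl⟩)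

theorem part_v6 (ε : ℕ) : ⁅Rgrp L ε, Agrp L⁆ ≤ Agrp L := by
  rw [Subgroup.commutator_le]
  intro a ha b hb
  rw [mem_Rgrp] at ha
  obtain ⟨μ, rfl⟩ := ha
  rw [mem_Agrp] at hb
  obtain ⟨u, v, w, rfl⟩ := hb
  rw [comm_eq_aux (beta_alpha_swap ε μ μ u v w), alphaPerm_inv, alphaPerm_mul]
  exact mem_Agrp.2 ⟨_, _, _, rfl⟩

-- Part (vi) : [M,F] = ⊥
theorem part_vi1 (ε : ℕ) : ⁅Mgrp L ε, Fgrp L⁆ = ⊥ := by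
  have hM : Mgrp L ε = Subgroup.closure
      (({g : Perm (L × L × L) | ∃ e : L, g = gammaPerm e} ∪ {deltaPerm L})
        ∪ {g : Perm (L × L × L) | ∃ μ : Lˣ, g = betaPerm ε μ μ⁻¹}) := by
    unfold Mgrp Cgrp Dgrp Tgrp
    rw [Subgroup.closure_union, Subgroup.closure_union]
  rw [hM]
  unfold Fgrp
  refine comm_bot_of_aux ?_
  rintro a ha b ⟨w, rfl⟩
  rcases ha with (⟨e, rfl⟩ | ha) | ⟨μ, rfl⟩
  · simpa using gamma_alpha_swap e (0 : L) 0 w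
  · rw [Set.mem_singleton_iff] at ha
    subst ha
    simpa using delta_alpha_swap (0 : L) 0 w
  · simpa using beta_alpha_swap ε μ μ⁻¹ 0 0 w

-- M normalizes V
theorem M_le_normalizer_V (ε : ℕ) : Mgrp L ε ≤ Subgroup.normalizer (Vgrp L : Set (Perm (L × L × L))) := by
  unfold Mgrp
  refine sup_le (sup_le ?_ ?_) ?_
  · unfold Cgrp
    rw [Subgroup.closure_le]
    rintro g ⟨e, rfl⟩
    refine mem_normalizer_of_aux _ ?_ ?_
    · intro x hx
      rw [mem_Vgrp] at hx
      obtain ⟨u, v, rfl⟩ := hx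
      rw [conj_eq_aux (gamma_alpha_swap e u v 0)]
      exact mem_Vgrp.2 ⟨_, _, rfl⟩
    · intro x hx
      rw [mem_Vgrp] at hx
      obtain ⟨u, v, rfl⟩ := hx
      have hs := gamma_alpha_swap e (u - e * v) v 0
      rw [sub_add_cancel] at hs
      rw [conj_eq_aux' hs]
      exact mem_Vgrp.2 ⟨_, _, rfl⟩
  · unfold Dgrp
    rw [Subgroup.closure_le]
    rintro g hg
    rw [Set.mem_singleton_iff] at hg
    subst hg
    refine mem_normalizer_of_aux _ ?_ ?_
    · intro x hx
      rw [mem_Vgrp] at hx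
      obtain ⟨u, v, rfl⟩ := hx
      rw [conj_eq_aux (delta_alpha_swap u v 0)]
      exact mem_Vgrp.2 ⟨_, _, rfl⟩
    · intro x hx
      rw [mem_Vgrp] at hx
      obtain ⟨u, v, rfl⟩ := hx
      have hs := delta_alpha_swap (-v) u 0
      rw [neg_neg] at hs
      rw [conj_eq_aux' hs]
      exact mem_Vgrp.2 ⟨_, _, rfl⟩
  · unfold Tgrp
    rw [Subgroup.closure_le]
    rintro g ⟨μ, rfl⟩
    refine mem_normalizer_of_aux _ ?_ ?_
    · intro x hx
      rw [mem_Vgrp] at hx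
      obtain ⟨u, v, rfl⟩ := hx
      have hs := beta_alpha_swap ε μ μ⁻¹ u v 0
      rw [mul_zero] at hs
      rw [conj_eq_aux hs]
      exact mem_Vgrp.2 ⟨_, _, rfl⟩
    · intro x hx
      rw [mem_Vgrp] at hx
      obtain ⟨u, v, rfl⟩ := hx
      have hs : betaPerm ε μ μ⁻¹ * alphaPerm ((μ⁻¹ : Lˣ) * u) ((μ : Lˣ) * v) 0
          = alphaPerm u v 0 * betaPerm ε μ μ⁻¹ := by
        rw [beta_alpha_swap]
        congr 1
        exact alphaPerm_congr (by simp) (by simp) (by simp)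
      rw [conj_eq_aux' hs]
      exact mem_Vgrp.2 ⟨_, _, rfl⟩

-- Part (vi) : [M,V] = V
theorem part_vi2 (ε : ℕ) (h3 : (3 : L) = 0) : ⁅Mgrp L ε, Vgrp L⁆ = Vgrp L := by
  apply le_antisymm
  · rw [Subgroup.commutator_le]
    intro m hm v hv
    rw [commutatorElement_def]
    exact mul_mem ((Subgroup.mem_normalizer_iff.1 (M_le_normalizer_V ε hm) v).1 hv)
      (inv_mem hv)
  · unfold Vgrp
    rw [Subgroup.closure_le]
    rintro g ⟨u, v, rfl⟩
    have hval : ⁅(deltaPerm L) ^ 2, alphaPerm u v 0⁆ = alphaPerm u v 0 := by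
      rw [comm_eq_aux (delta_sq_alpha_swap u v 0), alphaPerm_inv, alphaPerm_mul]
      exact alphaPerm_congr (by linear_combination (-u) * h3) (by linear_combination (-v) * h3)
        (by ring)
    rw [← hval]
    have hd2 : (deltaPerm L) ^ 2 ∈ Mgrp L ε := by
      unfold Mgrp
      exact Subgroup.mem_sup_left (Subgroup.mem_sup_right (pow_mem delta_mem_Dgrp 2))
    exact Subgroup.commutator_mem_commutator hd2 (mem_Vgrp.2 ⟨u, v, rfl⟩)

-- Part (vi) : [M,S] ≤ M
theorem part_vi3 (ε : ℕ) : ⁅Mgrp L ε, Sgrp L ε⁆ ≤ Mgrp L ε := by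
  rw [Subgroup.commutator_le]
  intro m hm s hs
  rw [mem_Sgrp] at hs
  obtain ⟨μ, rfl⟩ := hs
  have hle : Mgrp L ε ≤ (Mgrp L ε).comap (MulAut.conj (betaPerm ε (μ ^ 2) μ)).toMonoidHom := by
    nth_rewrite 1 [Mgrp]
    refine sup_le (sup_le ?_ ?_) ?_
    · unfold Cgrp
      rw [Subgroup.closure_le]
      rintro g ⟨e, rfl⟩
      simp only [SetLike.mem_coe, Subgroup.mem_comap, MulEquiv.coe_toMonoidHom, MulAut.conj_apply]
      rw [conj_eq_aux (beta_gamma_swap ε (μ ^ 2) μ e)]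
      unfold Mgrp
      exact Subgroup.mem_sup_left (Subgroup.mem_sup_left (Subgroup.subset_closure ⟨_, rfl⟩))
    · unfold Dgrp
      rw [Subgroup.closure_le]
      rintro g hg
      rw [Set.mem_singleton_iff] at hg
      subst hg
      simp only [SetLike.mem_coe, Subgroup.mem_comap, MulEquiv.coe_toMonoidHom, MulAut.conj_apply]
      rw [conj_eq_aux (betaS_delta_swap ε μ)]
      unfold Mgrp
      refine mul_mem (Subgroup.mem_sup_left (Subgroup.mem_sup_right (Subgroup.subset_closure rfl)))
        (Subgroup.mem_sup_right (Subgroup.subset_closure ⟨μ⁻¹, betaPerm_congr rfl (inv_inv μ).symm⟩))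
    · unfold Tgrp
      rw [Subgroup.closure_le]
      rintro g ⟨ν, rfl⟩
      simp only [SetLike.mem_coe, Subgroup.mem_comap, MulEquiv.coe_toMonoidHom, MulAut.conj_apply]
      have hs : betaPerm ε (μ ^ 2) μ * betaPerm ε ν ν⁻¹
          = betaPerm ε ν ν⁻¹ * betaPerm ε (μ ^ 2) μ := by
        rw [betaPerm_mul, betaPerm_mul, mul_comm (μ ^ 2) ν, mul_comm μ ν⁻¹]
      rw [conj_eq_aux hs]
      unfold Mgrp
      exact Subgroup.mem_sup_right (Subgroup.subset_closure ⟨ν, rfl⟩)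
  have key := Subgroup.mem_comap.1 (hle (inv_mem hm))
  simp only [MulEquiv.coe_toMonoidHom, MulAut.conj_apply] at key
  have hco : ⁅m, betaPerm ε (μ ^ 2) μ⁆
      = m * (betaPerm ε (μ ^ 2) μ * m⁻¹ * (betaPerm ε (μ ^ 2) μ)⁻¹) := by
    rw [commutatorElement_def]; group
  rw [hco]
  exact mul_mem hm key

-- Part (vii)
theorem C_le_stab :
    Cgrp L ≤ MulAction.stabilizer (Perm (L × L × L)) ((0, 0, 0) : L × L × L) := by
  unfold Cgrp
  rw [Subgroup.closure_le]
  rintro g ⟨e, rfl⟩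
  rw [SetLike.mem_coe, MulAction.mem_stabilizer_iff]
  show gammaPerm e (0, 0, 0) = (0, 0, 0)
  simp [gammaPerm]

theorem MS_le_stab (ε : ℕ) :
    Mgrp L ε ⊔ Sgrp L ε ≤ MulAction.stabilizer (Perm (L × L × L)) ((0, 0, 0) : L × L × L) := by
  have hC := (C_le_stab : Cgrp L ≤ _)
  refine sup_le ?_ ?_
  · unfold Mgrp
    refine sup_le (sup_le hC ?_) ?_
    · unfold Dgrp
      rw [Subgroup.closure_le]
      rintro g hg
      rw [Set.mem_singleton_iff] at hg
      subst hg
      rw [SetLike.mem_coe, MulAction.mem_stabilizer_iff]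
      show deltaPerm L (0, 0, 0) = (0, 0, 0)
      simp [deltaPerm]
    · unfold Tgrp
      rw [Subgroup.closure_le]
      rintro g ⟨μ, rfl⟩
      rw [SetLike.mem_coe, MulAction.mem_stabilizer_iff]
      show betaPerm ε μ μ⁻¹ (0, 0, 0) = (0, 0, 0)
      simp [betaPerm]
  · unfold Sgrp
    rw [Subgroup.closure_le]
    rintro g ⟨μ, rfl⟩
    rw [SetLike.mem_coe, MulAction.mem_stabilizer_iff]
    show betaPerm ε (μ ^ 2) μ (0, 0, 0) = (0, 0, 0)
    simp [betaPerm]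

theorem stab_inf_A {H : Subgroup (Perm (L × L × L))}
    (hH : H ≤ MulAction.stabilizer (Perm (L × L × L)) ((0, 0, 0) : L × L × L))
    {g : Perm (L × L × L)} (hg : g ∈ H) (hA : ∃ u v w : L, g = alphaPerm u v w) : g = 1 := by
  obtain ⟨u, v, w, rfl⟩ := hA
  have h0 := MulAction.mem_stabilizer_iff.1 (hH hg)
  have h1 : alphaPerm u v w (0, 0, 0) = ((0 : L), (0 : L), (0 : L)) := h0
  simp [alphaPerm, Prod.ext_iff] at h1
  obtain ⟨rfl, rfl, rfl⟩ := h1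
  exact alphaPerm_zero

theorem part_vii1 (ε : ℕ) : (Mgrp L ε ⊔ Sgrp L ε) ⊓ Agrp L = ⊥ := by
  rw [eq_bot_iff]
  intro g hg
  rw [Subgroup.mem_inf] at hg
  rw [Subgroup.mem_bot]
  exact stab_inf_A (MS_le_stab ε) hg.1 (mem_Agrp.1 hg.2)

theorem part_vii2 (ε : ℕ) : (Mgrp L ε ⊔ Sgrp L ε) ⊓ Vgrp L = ⊥ := by
  rw [eq_bot_iff]
  intro g hg
  rw [Subgroup.mem_inf] at hg
  rw [Subgroup.mem_bot]
  obtain ⟨u, v, rfl⟩ := mem_Vgrp.1 hg.2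
  exact stab_inf_A (MS_le_stab ε) hg.1 ⟨u, v, 0, rfl⟩

theorem part_vii3 : Cgrp L ⊓ Agrp L = ⊥ := by
  rw [eq_bot_iff]
  intro g hg
  rw [Subgroup.mem_inf] at hg
  rw [Subgroup.mem_bot]
  exact stab_inf_A C_le_stab hg.1 (mem_Agrp.1 hg.2)

theorem part_vii4 (ε : ℕ) (h3 : (3 : L) = 0) : Tgrp L ε ⊓ Sgrp L ε = ⊥ := by
  rw [eq_bot_iff]
  intro g hg
  rw [Subgroup.mem_inf] at hg
  rw [Subgroup.mem_bot]
  obtain ⟨μ, rfl⟩ := mem_Tgrp.1 hg.1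
  obtain ⟨ν, hν⟩ := mem_Sgrp.1 hg.2
  obtain ⟨h1, h2⟩ := betaPerm_param_eq hν
  have hν3 : ν ^ 3 = 1 := by
    have hmm : μ * μ⁻¹ = 1 := mul_inv_cancel μ
    rw [h2, h1] at hmm
    calc ν ^ 3 = ν ^ 2 * ν := pow_succ ν 2
    _ = 1 := hmm
  have hcube : ((ν : L)) ^ 3 = 1 := by
    have := congrArg (Units.val) hν3
    simpa using this
  have hsub : (((ν : L)) - 1) ^ 3 = 0 := by
    linear_combination hcube + (-((ν : L)) ^ 2 + ((ν : L))) * h3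
  have hν1 : ((ν : L)) = 1 := by
    have h0 := (pow_eq_zero_iff (by norm_num : (3 : ℕ) ≠ 0)).1 hsub
    exact sub_eq_zero.1 h0
  have hνu : ν = 1 := Units.ext (by simpa using hν1)
  subst hνu
  have hμ : μ = 1 := by simpa using h1
  subst hμ
  rw [inv_one, betaPerm_one]

end PartsB
/-- Lemma 2.3: commutator and intersection relations among the subgroups
`A, V, F, Z, C, R, S, T, D, M` of `Sym(Ω)`, where `MS = ⟨M, S⟩ = M ⊔ S`. -/
theorem stmt2 (r : ℕ) (hr : 1 ≤ r) (K : Type*) [Field K] [Fintype K]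
    (hcard : Fintype.card K = 3 ^ r) (ε : ℕ) (hε : ε = 3 ^ (r - 1)) :
    (⁅Dgrp K, Tgrp K ε⁆ ≤ Tgrp K ε ∧ ⁅Cgrp K, Tgrp K ε⁆ ≤ Cgrp K)
    ∧ (⁅Vgrp K, Cgrp K⁆ = Zgrp K ∧ ⁅Vgrp K, Dgrp K⁆ = Vgrp K ∧ ⁅Vgrp K, Tgrp K ε⁆ = Vgrp K)
    ∧ (⁅Fgrp K, Sgrp K ε⁆ ≤ Fgrp K ∧ ⁅Vgrp K, Sgrp K ε⁆ ≤ Vgrp K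
      ∧ ⁅Dgrp K, Sgrp K ε⁆ = Tgrp K ε ∧ ⁅Tgrp K ε, Sgrp K ε⁆ = ⊥ ∧ ⁅Cgrp K, Sgrp K ε⁆ = Cgrp K)
    ∧ (⁅Vgrp K, Fgrp K⁆ = ⊥ ∧ ⁅Dgrp K, Fgrp K⁆ = ⊥ ∧ ⁅Tgrp K ε, Fgrp K⁆ = ⊥
      ∧ ⁅Cgrp K, Fgrp K⁆ = ⊥)
    ∧ (⁅Rgrp K ε, Cgrp K⁆ = ⊥ ∧ ⁅Rgrp K ε, Dgrp K⁆ = ⊥ ∧ ⁅Rgrp K ε, Sgrp K ε⁆ = ⊥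
      ∧ ⁅Rgrp K ε, Tgrp K ε⁆ = ⊥ ∧ ⁅Rgrp K ε, Vgrp K⁆ = Vgrp K ∧ ⁅Rgrp K ε, Agrp K⁆ ≤ Agrp K)
    ∧ (⁅Mgrp K ε, Fgrp K⁆ = ⊥ ∧ ⁅Mgrp K ε, Vgrp K⁆ = Vgrp K ∧ ⁅Mgrp K ε, Sgrp K ε⁆ ≤ Mgrp K ε)
    ∧ ((Mgrp K ε ⊔ Sgrp K ε) ⊓ Agrp K = ⊥ ∧ (Mgrp K ε ⊔ Sgrp K ε) ⊓ Vgrp K = ⊥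
      ∧ Cgrp K ⊓ Agrp K = ⊥ ∧ Tgrp K ε ⊓ Sgrp K ε = ⊥) := by
  have h3 : (3 : K) = 0 := by
    have hc := FiniteField.cast_card_eq_zero K
    rw [hcard] at hc
    push_cast at hc
    exact (pow_eq_zero_iff (by omega : r ≠ 0)).1 hc
  exact ⟨⟨part_i1 ε, part_i2 ε⟩,
    ⟨part_ii1, part_ii2 h3, part_ii3 ε h3⟩,
    ⟨part_iii1 ε, part_iii2 ε, part_iii3 ε, part_iii4 ε, part_iii5 ε h3⟩,
    ⟨part_iv1, part_iv2, part_iv3 ε, part_iv4⟩,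
    ⟨part_v1 ε, part_v2 ε, part_v3 ε, part_v4 ε, part_v5 ε h3, part_v6 ε⟩,
    ⟨part_vi1 ε, part_vi2 ε h3, part_vi3 ε⟩,
    ⟨part_vii1 ε, part_vii2 ε, part_vii3, part_vii4 ε h3⟩⟩
end

section
/- The subgroup M = ⟨C, D, T⟩ of Sym(Ω) is isomorphic to SL₂(F_q), we have M ∩ S = 1, and the subgroup ⟨M, S⟩ is isomorphic to GL₂(F_q). -/
open Equiv

variable (K : Type*) [Field K]

namespace StmtAux

variable {K : Type*} [Field K]

/-- Action of a 2×2 matrix on `K × K × K`. -/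
def mact (ε : ℕ) (m : Matrix (Fin 2) (Fin 2) K) (x : K × K × K) : K × K × K :=
  (m 0 0 * x.1 + m 0 1 * x.2.1, m 1 0 * x.1 + m 1 1 * x.2.1, m.det ^ (2 * ε) * x.2.2)

lemma mact_one (ε : ℕ) (x : K × K × K) : mact ε (1 : Matrix (Fin 2) (Fin 2) K) x = x := by
  simp [mact, Matrix.one_apply]

lemma mact_mul (ε : ℕ) (m n : Matrix (Fin 2) (Fin 2) K) (x : K × K × K) :
    mact ε (m * n) x = mact ε m (mact ε n x) := by
  simp only [mact, Matrix.mul_apply, Fin.sum_univ_two, Matrix.det_mul, mul_pow]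
  refine Prod.ext (by ring) (Prod.ext (by ring) (by ring))

/-- `φ(g)` as a permutation. -/
def phiFun (ε : ℕ) (g : GL (Fin 2) K) : Equiv.Perm (K × K × K) where
  toFun := mact ε (g : Matrix (Fin 2) (Fin 2) K)
  invFun := mact ε ((g⁻¹ : GL (Fin 2) K) : Matrix (Fin 2) (Fin 2) K)
  left_inv x := by rw [← mact_mul, ← Units.val_mul, inv_mul_cancel, Units.val_one, mact_one]
  right_inv x := by rw [← mact_mul, ← Units.val_mul, mul_inv_cancel, Units.val_one, mact_one]

/-- The homomorphism `φ : GL₂(K) →* Perm(K × K × K)`. -/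
def phi (ε : ℕ) : GL (Fin 2) K →* Equiv.Perm (K × K × K) where
  toFun := phiFun ε
  map_one' := Equiv.ext fun x => by
    simpa [phiFun] using mact_one ε x
  map_mul' g h := Equiv.ext fun x => by
    simp [phiFun, Units.val_mul, mact_mul, Equiv.Perm.mul_apply]

lemma phi_coe (ε : ℕ) (g : GL (Fin 2) K) :
    ⇑(phi ε g) = mact ε (g : Matrix (Fin 2) (Fin 2) K) := rfl

lemma phi_injective (ε : ℕ) : Function.Injective (phi (K := K) ε) := by
  intro g h hgh
  have e : ∀ x : K × K × K, mact ε (g : Matrix (Fin 2) (Fin 2) K) x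
      = mact ε (h : Matrix (Fin 2) (Fin 2) K) x := by
    intro x
    have := congrArg (fun p : Equiv.Perm (K × K × K) => p x) hgh
    simpa [phi_coe] using this
  have e1 := e (1, 0, 0)
  have e2 := e (0, 1, 0)
  simp only [mact, mul_one, mul_zero, add_zero, zero_add, Prod.mk.injEq] at e1 e2
  ext i j
  fin_cases i <;> fin_cases j <;>
    simp_all

end StmtAux
namespace StmtAux

variable {K : Type*} [Field K]

/-- Upper unitriangular matrix as an element of `GL₂`. -/
def glU (e : K) : GL (Fin 2) K :=
  ⟨!![1, e; 0, 1], !![1, -e; 0, 1],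
    by ext i j; fin_cases i <;> fin_cases j <;>
      simp [Matrix.mul_apply, Fin.sum_univ_two, Matrix.one_apply],
    by ext i j; fin_cases i <;> fin_cases j <;>
      simp [Matrix.mul_apply, Fin.sum_univ_two, Matrix.one_apply]⟩

/-- The Weyl element as an element of `GL₂`. -/
def glW : GL (Fin 2) K :=
  ⟨!![0, 1; -1, 0], !![0, -1; 1, 0],
    by ext i j; fin_cases i <;> fin_cases j <;>
      simp [Matrix.mul_apply, Fin.sum_univ_two, Matrix.one_apply],
    by ext i j; fin_cases i <;> fin_cases j <;>
      simp [Matrix.mul_apply, Fin.sum_univ_two, Matrix.one_apply]⟩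

/-- A diagonal matrix as an element of `GL₂`. -/
def glD (l m : Kˣ) : GL (Fin 2) K :=
  ⟨!![(l : K), 0; 0, (m : K)], !![((l⁻¹ : Kˣ) : K), 0; 0, ((m⁻¹ : Kˣ) : K)],
    by ext i j; fin_cases i <;> fin_cases j <;>
      simp [Matrix.mul_apply, Fin.sum_univ_two, Matrix.one_apply],
    by ext i j; fin_cases i <;> fin_cases j <;>
      simp [Matrix.mul_apply, Fin.sum_univ_two, Matrix.one_apply]⟩

lemma phi_glU (ε : ℕ) (e : K) : phi ε (glU e) = gammaPerm e := by
  apply Equiv.coe_fn_injective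
  funext x
  show mact ε _ x = _
  simp [mact, glU, gammaPerm, Matrix.det_fin_two_of]

lemma phi_glW (ε : ℕ) : phi ε (glW : GL (Fin 2) K) = deltaPerm K := by
  apply Equiv.coe_fn_injective
  funext x
  show mact ε _ x = _
  simp [mact, glW, deltaPerm, Matrix.det_fin_two_of]

lemma phi_glD (ε : ℕ) (l m : Kˣ) : phi ε (glD l m) = betaPerm ε l m := by
  apply Equiv.coe_fn_injective
  funext x
  show mact ε _ x = _
  simp [mact, glD, betaPerm, Matrix.det_fin_two_of, Units.val_pow_eq_pow_val, Units.val_mul]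

lemma betaPerm_mul (ε : ℕ) (l m l' m' : Kˣ) :
    betaPerm ε l m * betaPerm (K := K) ε l' m' = betaPerm ε (l * l') (m * m') := by
  rw [← phi_glD, ← phi_glD, ← phi_glD, ← map_mul]
  congr 1
  ext i j
  fin_cases i <;> fin_cases j <;>
    simp [glD, Units.val_mul, Matrix.mul_apply, Fin.sum_univ_two]

lemma betaPerm_one (ε : ℕ) : betaPerm (K := K) ε 1 1 = 1 := by
  rw [← phi_glD]
  have : glD (1 : Kˣ) 1 = (1 : GL (Fin 2) K) := by
    ext i j
    fin_cases i <;> fin_cases j <;> simp [glD, Matrix.one_apply]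
  rw [this, map_one]

end StmtAux
namespace StmtAux

variable {K : Type*} [Field K]

lemma gamma_mem_M (ε : ℕ) (e : K) : gammaPerm e ∈ Mgrp K ε :=
  Subgroup.mem_sup_left (Subgroup.mem_sup_left (Subgroup.subset_closure ⟨e, rfl⟩))

lemma delta_mem_M (ε : ℕ) : deltaPerm K ∈ Mgrp K ε :=
  Subgroup.mem_sup_left (Subgroup.mem_sup_right (Subgroup.subset_closure rfl))

lemma betaT_mem_M (ε : ℕ) (μ : Kˣ) : betaPerm ε μ μ⁻¹ ∈ Mgrp K ε :=
  Subgroup.mem_sup_right (Subgroup.subset_closure ⟨μ, rfl⟩)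

lemma betaS_mem_S (ε : ℕ) (μ : Kˣ) : betaPerm ε (μ ^ 2) μ ∈ Sgrp K ε :=
  Subgroup.subset_closure ⟨μ, rfl⟩

/-- A permutation in `M` realizing each transvection. -/
lemma exists_perm_transvec (ε : ℕ) (t : Matrix.TransvectionStruct (Fin 2) K) :
    ∃ x ∈ Mgrp K ε, ⇑x = mact ε t.toMatrix := by
  obtain ⟨i, j, hij, c⟩ := t
  fin_cases i <;> fin_cases j
  · exact absurd rfl hij
  · refine ⟨gammaPerm c, gamma_mem_M ε c, ?_⟩
    funext x
    simp [gammaPerm, mact, Matrix.TransvectionStruct.toMatrix, Matrix.transvection,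
      Matrix.det_fin_two, Matrix.one_apply,
      Matrix.single, Matrix.add_apply]
  · refine ⟨(deltaPerm K)⁻¹ * gammaPerm (-c) * deltaPerm K,
      mul_mem (mul_mem (inv_mem (delta_mem_M ε)) (gamma_mem_M ε (-c))) (delta_mem_M ε), ?_⟩
    funext x
    simp [gammaPerm, deltaPerm, mact, Equiv.Perm.mul_apply, Matrix.TransvectionStruct.toMatrix,
      Matrix.transvection, Matrix.det_fin_two, Matrix.one_apply,
      Matrix.single, Matrix.add_apply, Equiv.Perm.inv_def]
    ring_nf
  · exact absurd rfl hij

/-- A permutation in `M` realizing products of transvections. -/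
lemma exists_perm_list (ε : ℕ) (L : List (Matrix.TransvectionStruct (Fin 2) K)) :
    ∃ x ∈ Mgrp K ε, ⇑x = mact ε (L.map Matrix.TransvectionStruct.toMatrix).prod := by
  induction L with
  | nil =>
    refine ⟨1, one_mem _, ?_⟩
    funext x
    simp [mact_one]
  | cons t L ih =>
    obtain ⟨x, hx, hx2⟩ := ih
    obtain ⟨y, hy, hy2⟩ := exists_perm_transvec ε t
    refine ⟨y * x, mul_mem hy hx, ?_⟩
    funext z
    simp [Equiv.Perm.mul_apply, hx2, hy2, mact_mul]

end StmtAux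
namespace StmtAux

variable {K : Type*} [Field K]

/-- The homomorphism `ψ : SL₂(K) →* Perm(Ω)`. -/
def psi (ε : ℕ) : Matrix.SpecialLinearGroup (Fin 2) K →* Equiv.Perm (K × K × K) :=
  (phi ε).comp Matrix.SpecialLinearGroup.toGL

lemma psi_coe (ε : ℕ) (g : Matrix.SpecialLinearGroup (Fin 2) K) :
    ⇑(psi ε g) = mact ε (g : Matrix (Fin 2) (Fin 2) K) := rfl

lemma psi_injective (ε : ℕ) :
    Function.Injective (psi (K := K) ε) := by
  intro a b h
  have := phi_injective ε h
  have h2 := congrArg Units.val this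
  exact Subtype.ext h2

/-- A permutation of `M` realizing a determinant-one diagonal matrix. -/
lemma exists_perm_diag_M (ε : ℕ) (D : Fin 2 → K) (hD : D 0 * D 1 = 1) :
    ∃ x ∈ Mgrp K ε, ⇑x = mact ε (Matrix.diagonal D) := by
  refine ⟨betaPerm ε (Units.mk (D 0) (D 1) hD (by rw [mul_comm]; exact hD))
      (Units.mk (D 0) (D 1) hD (by rw [mul_comm]; exact hD))⁻¹,
    betaT_mem_M ε _, ?_⟩
  funext x
  simp [betaPerm, mact, Matrix.diagonal, Matrix.det_fin_two, hD]

/-- A permutation of `⟨M, S⟩` realizing any invertible diagonal matrix. -/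
lemma exists_perm_diag_MS (ε : ℕ) (hcube : ∀ d : Kˣ, ∃ ν : Kˣ, ν ^ 3 = d)
    (D : Fin 2 → K) (hD : IsUnit (Matrix.diagonal D).det) :
    ∃ x ∈ Mgrp K ε ⊔ Sgrp K ε, ⇑x = mact ε (Matrix.diagonal D) := by
  rw [Matrix.det_diagonal, Fin.prod_univ_two] at hD
  have h0 : IsUnit (D 0) := isUnit_of_mul_isUnit_left hD
  have h1 : IsUnit (D 1) := isUnit_of_mul_isUnit_right hD
  obtain ⟨a, ha⟩ := h0
  obtain ⟨b, hb⟩ := h1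
  obtain ⟨ν, hν⟩ := hcube (a * b)
  set μ : Kˣ := a * (ν ^ 2)⁻¹ with hμ
  have key : betaPerm (K := K) ε (ν ^ 2) ν * betaPerm ε μ μ⁻¹ = betaPerm ε a b := by
    rw [betaPerm_mul]
    have e1 : ν ^ 2 * μ = a := by
      rw [hμ, mul_comm a, ← mul_assoc, mul_inv_cancel, one_mul]
    have e2 : ν * μ⁻¹ = b := by
      rw [hμ, mul_inv, inv_inv, mul_comm a⁻¹, ← mul_assoc, ← pow_succ', hν,
        mul_comm a b, mul_assoc, mul_inv_cancel, mul_one]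
    rw [e1, e2]
  refine ⟨betaPerm ε a b, ?_, ?_⟩
  · rw [← key]
    exact mul_mem (Subgroup.mem_sup_right (betaS_mem_S ε ν))
      (Subgroup.mem_sup_left (betaT_mem_M ε μ))
  · funext x
    simp [betaPerm, mact, Matrix.diagonal, Matrix.det_fin_two, ← ha, ← hb,
      Units.val_pow_eq_pow_val, Units.val_mul]

lemma phi_mem_MS (ε : ℕ) (hcube : ∀ d : Kˣ, ∃ ν : Kˣ, ν ^ 3 = d) (g : GL (Fin 2) K) :
    phi ε g ∈ Mgrp K ε ⊔ Sgrp K ε := by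
  obtain ⟨L, L', D, h⟩ :=
    Matrix.Pivot.exists_list_transvec_mul_diagonal_mul_list_transvec
      (g : Matrix (Fin 2) (Fin 2) K)
  have hdet : IsUnit (Matrix.diagonal D).det := by
    have hg : IsUnit (g : Matrix (Fin 2) (Fin 2) K).det :=
      (Matrix.isUnit_iff_isUnit_det _).mp ⟨g, rfl⟩
    rw [h] at hg
    simpa using hg
  obtain ⟨x, hx, hx2⟩ := exists_perm_list ε L
  obtain ⟨y, hy, hy2⟩ := exists_perm_diag_MS ε hcube D hdet
  obtain ⟨z, hz, hz2⟩ := exists_perm_list ε L'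
  have : phi ε g = x * y * z := by
    apply Equiv.coe_fn_injective
    funext w
    simp [phi_coe, h, mact_mul, Equiv.Perm.mul_apply, hx2, hy2, hz2]
  rw [this]
  exact mul_mem (mul_mem (Subgroup.mem_sup_left hx) hy) (Subgroup.mem_sup_left hz)

lemma psi_mem_M (ε : ℕ) (g : Matrix.SpecialLinearGroup (Fin 2) K) :
    psi ε g ∈ Mgrp K ε := by
  obtain ⟨L, L', D, h⟩ :=
    Matrix.Pivot.exists_list_transvec_mul_diagonal_mul_list_transvec
      (g : Matrix (Fin 2) (Fin 2) K)
  have hdet : D 0 * D 1 = 1 := by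
    have hg : (g : Matrix (Fin 2) (Fin 2) K).det = 1 := g.2
    rw [h] at hg
    simpa [Fin.prod_univ_two] using hg
  obtain ⟨x, hx, hx2⟩ := exists_perm_list ε L
  obtain ⟨y, hy, hy2⟩ := exists_perm_diag_M ε D hdet
  obtain ⟨z, hz, hz2⟩ := exists_perm_list ε L'
  have : psi ε g = x * y * z := by
    apply Equiv.coe_fn_injective
    funext w
    simp [psi_coe, h, mact_mul, Equiv.Perm.mul_apply, hx2, hy2, hz2]
  rw [this]
  exact mul_mem (mul_mem hx hy) hz

end StmtAux
namespace StmtAux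

variable {K : Type*} [Field K]

/-- `M` is precisely the range of `ψ`. -/
lemma range_psi (ε : ℕ) : (psi (K := K) ε).range = Mgrp K ε := by
  apply le_antisymm
  · rintro _ ⟨g, rfl⟩
    exact psi_mem_M ε g
  · refine sup_le (sup_le ?_ ?_) ?_
    · rw [Cgrp, Subgroup.closure_le]
      rintro _ ⟨e, rfl⟩
      refine ⟨⟨!![1, e; 0, 1], by simp [Matrix.det_fin_two_of]⟩, ?_⟩
      have : Matrix.SpecialLinearGroup.toGL
          (⟨!![1, e; 0, 1], by simp [Matrix.det_fin_two_of]⟩ :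
            Matrix.SpecialLinearGroup (Fin 2) K) = glU e := by
        apply Units.ext
        rfl
      rw [psi]; exact (congrArg (phi ε) this).trans (phi_glU ε e)
    · rw [Dgrp, Subgroup.closure_le]
      rintro _ rfl
      refine ⟨⟨!![0, 1; -1, 0], by simp [Matrix.det_fin_two_of]⟩, ?_⟩
      have : Matrix.SpecialLinearGroup.toGL
          (⟨!![0, 1; -1, 0], by simp [Matrix.det_fin_two_of]⟩ :
            Matrix.SpecialLinearGroup (Fin 2) K) = glW := by
        apply Units.ext
        rfl
      rw [psi]; exact (congrArg (phi ε) this).trans (phi_glW ε)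
    · rw [Tgrp, Subgroup.closure_le]
      rintro _ ⟨μ, rfl⟩
      refine ⟨⟨!![(μ : K), 0; 0, ((μ⁻¹ : Kˣ) : K)], by simp [Matrix.det_fin_two_of]⟩, ?_⟩
      have : Matrix.SpecialLinearGroup.toGL
          (⟨!![(μ : K), 0; 0, ((μ⁻¹ : Kˣ) : K)], by simp [Matrix.det_fin_two_of]⟩ :
            Matrix.SpecialLinearGroup (Fin 2) K) = glD μ μ⁻¹ := by
        apply Units.ext
        rfl
      rw [psi]; exact (congrArg (phi ε) this).trans (phi_glD ε μ μ⁻¹)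

/-- `⟨M, S⟩` is precisely the range of `φ`. -/
lemma range_phi (ε : ℕ) (hcube : ∀ d : Kˣ, ∃ ν : Kˣ, ν ^ 3 = d) :
    (phi (K := K) ε).range = Mgrp K ε ⊔ Sgrp K ε := by
  apply le_antisymm
  · rintro _ ⟨g, rfl⟩
    exact phi_mem_MS ε hcube g
  · refine sup_le ?_ ?_
    · rw [← range_psi ε]
      rintro _ ⟨g, rfl⟩
      exact ⟨Matrix.SpecialLinearGroup.toGL g, rfl⟩
    · rw [Sgrp, Subgroup.closure_le]
      rintro _ ⟨μ, rfl⟩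
      exact ⟨glD (μ ^ 2) μ, phi_glD ε (μ ^ 2) μ⟩

/-- The homomorphism `θ : Kˣ →* Perm(Ω)` with range `S`. -/
def theta (ε : ℕ) : Kˣ →* Equiv.Perm (K × K × K) where
  toFun μ := betaPerm ε (μ ^ 2) μ
  map_one' := by simpa using betaPerm_one (K := K) ε
  map_mul' μ ν := by
    show betaPerm ε ((μ * ν) ^ 2) (μ * ν) = _
    rw [betaPerm_mul, mul_pow]

lemma range_theta (ε : ℕ) : (theta (K := K) ε).range = Sgrp K ε := by
  rw [Sgrp, ← Subgroup.closure_eq (theta (K := K) ε).range]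
  congr 1
  ext g
  simp only [MonoidHom.coe_range, Set.mem_range, Set.mem_setOf_eq, theta, MonoidHom.coe_mk,
    OneHom.coe_mk]
  exact ⟨fun ⟨μ, h⟩ => ⟨μ, h.symm⟩, fun ⟨μ, h⟩ => ⟨μ, h.symm⟩⟩

end StmtAux
/-- Lemma 2.4 (part): `M ≅ SL₂(F_q)`, `M ∩ S = 1` and `⟨M, S⟩ ≅ GL₂(F_q)`. -/
theorem stmt3 (r : ℕ) (hr : 1 ≤ r) (K : Type*) [Field K] [Fintype K]
    (hcard : Fintype.card K = 3 ^ r) (ε : ℕ) (hε : ε = 3 ^ (r - 1)) :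
    Nonempty (↥(Mgrp K ε) ≃* Matrix.SpecialLinearGroup (Fin 2) K)
    ∧ Mgrp K ε ⊓ Sgrp K ε = ⊥
    ∧ Nonempty (↥(Mgrp K ε ⊔ Sgrp K ε) ≃* GL (Fin 2) K) := by
  classical
  haveI f3 : Fact (Nat.Prime 3) := ⟨by norm_num⟩
  haveI hchar : CharP K 3 := by
    obtain ⟨p, hp⟩ := CharP.exists K
    haveI := hp
    obtain ⟨n, hpp, hcn⟩ := FiniteField.card K p
    have hdvd : p ∣ 3 ^ r := by
      rw [← hcard, hcn]
      exact dvd_pow_self p n.pos.ne'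
    have hp3 : p = 3 :=
      (Nat.prime_dvd_prime_iff_eq hpp (by norm_num)).mp (hpp.dvd_of_dvd_pow hdvd)
    rwa [hp3] at hp
  have hcube : ∀ d : Kˣ, ∃ ν : Kˣ, ν ^ 3 = d := by
    have hinj : Function.Injective (fun ν : Kˣ => ν ^ 3) := by
      intro a b h
      apply Units.ext
      apply frobenius_inj K 3
      have := congrArg (Units.val) h
      simpa [frobenius_def, Units.val_pow_eq_pow_val] using this
    intro d
    exact Finite.injective_iff_surjective.mp hinj d
  refine ⟨⟨(MulEquiv.subgroupCongr (StmtAux.range_psi (K := K) ε).symm).trans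
      (MonoidHom.ofInjective (StmtAux.psi_injective (K := K) ε)).symm⟩, ?_,
    ⟨(MulEquiv.subgroupCongr (StmtAux.range_phi (K := K) ε hcube).symm).trans
      (MonoidHom.ofInjective (StmtAux.phi_injective (K := K) ε)).symm⟩⟩
  rw [eq_bot_iff]
  intro x hx
  rw [Subgroup.mem_inf] at hx
  obtain ⟨hM, hS⟩ := hx
  rw [← StmtAux.range_psi ε] at hM
  rw [← StmtAux.range_theta ε] at hS
  obtain ⟨g, rfl⟩ := hM
  obtain ⟨μ, hμ⟩ := hS
  have hkey : (Matrix.SpecialLinearGroup.toGL g) = StmtAux.glD (μ ^ 2) μ := by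
    apply StmtAux.phi_injective ε
    rw [StmtAux.phi_glD]
    exact hμ.symm
  have hdet : ((μ : K)) ^ 3 = 1 := by
    have h1 := congrArg (fun u : GL (Fin 2) K =>
      ((u : Matrix (Fin 2) (Fin 2) K)).det) hkey
    simp only [StmtAux.glD] at h1
    have h2 : (g : Matrix (Fin 2) (Fin 2) K).det = 1 := g.2
    rw [show ((Matrix.SpecialLinearGroup.toGL g : GL (Fin 2) K) :
        Matrix (Fin 2) (Fin 2) K) = (g : Matrix (Fin 2) (Fin 2) K) from rfl] at h1
    rw [h2, Matrix.det_fin_two_of] at h1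
    have := h1.symm
    push_cast at this
    rw [show ((μ : K)) ^ 2 * (μ : K) = ((μ : K)) ^ 3 by ring] at this
    simpa using this
  have hμ1 : μ = 1 := by
    apply Units.ext
    apply frobenius_inj K 3
    simpa [frobenius_def] using hdet
  rw [Subgroup.mem_bot, ← hμ, hμ1, map_one]
end

section
/- The following relations hold for all u1,v1,w1,e1,d ∈ F_q and λ,μ ∈ F_q^×: (i) β_{λ,μ}⁻¹ τ_d β_{λ,μ} = τ_{λμ⁻² d}; (ii) τ_d⁻¹ α_{(u1,v1,w1)} τ_d = γ_{2d·v1} α_{(u1 + d·v1² + d^ε·w1, v1, w1)}; (iii) τ_d⁻¹ γ_{e1} τ_d = γ_{e1}. -/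
open Equiv

/-! Each relation is checked pointwise in the form `g * x = y * g`, which avoids inverses.
Relations (ii) and (iii) are identities of polynomials over any field. For (i), the
`c`-coefficients of both sides differ by the factor `λ^{3ε} / λ`, which is `1` because
`3ε = q` and `x^q = x` on `F_q`. -/

section Relations

variable {K : Type*} [Field K] (ε : ℕ)

theorem betaPerm_mul_tauPerm (l m : Kˣ) (d : K) (hl : (l : K) ^ (3 * ε) = l) :
    betaPerm ε l m * tauPerm ε d
      = tauPerm ε (((l * (m ^ 2)⁻¹ : Kˣ) : K) * d) * betaPerm ε l m := by
  ext ⟨a, b, c⟩ <;> simp only [betaPerm, tauPerm, Perm.coe_mul, coe_fn_mk, Function.comp_apply,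
    Units.val_pow_eq_pow_val, Units.val_mul, Units.val_inv_eq_inv_val]
  have key : ((l : K) * ((m : K) ^ 2)⁻¹ * d) ^ ε * ((l : K) * m) ^ (2 * ε)
      = l ^ (3 * ε) * d ^ ε := by
    have hmε : ((m : K) ^ (2 * ε))⁻¹ * (m : K) ^ (2 * ε) = 1 := inv_mul_cancel₀ (by simp)
    linear_combination (l : K) ^ (3 * ε) * d ^ ε * hmε
  have hm2 : ((m : K) ^ 2)⁻¹ * (m : K) ^ 2 = 1 := inv_mul_cancel₀ (by simp)
  linear_combination (-c) * key - c * d ^ ε * hl - l * d * b ^ 2 * hm2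

theorem tauPerm_mul_alphaPerm (d u v w : K) :
    tauPerm ε d * alphaPerm u v w
      = alphaPerm (u + d * v ^ 2 + d ^ ε * w) v w * gammaPerm (2 * d * v) * tauPerm ε d := by
  ext ⟨a, b, c⟩ <;> simp only [tauPerm, alphaPerm, gammaPerm, Perm.coe_mul,
    coe_fn_mk, Function.comp_apply]
  ring

theorem commute_tauPerm_gammaPerm (d e : K) : Commute (tauPerm ε d) (gammaPerm e) := by
  ext ⟨a, b, c⟩ <;> simp only [tauPerm, gammaPerm, Perm.coe_mul, coe_fn_mk,
    Function.comp_apply]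
  ring

end Relations

/-- Lemma 2.6: relations involving `τ_d`.  The paper's conjugate `g⁻¹ x g` (composed left
to right) is `g * x * g⁻¹` in Lean, and the paper's product `γ·α` is `alphaPerm … * gammaPerm …`. -/
theorem stmt7 (r : ℕ) (hr : 1 ≤ r) (K : Type*) [Field K] [Fintype K]
    (hcard : Fintype.card K = 3 ^ r) (ε : ℕ) (hε : ε = 3 ^ (r - 1))
    (u₁ v₁ w₁ e₁ d : K) (lam mu : Kˣ) :
    betaPerm ε lam mu * tauPerm ε d * (betaPerm ε lam mu)⁻¹
      = tauPerm ε (((lam * (mu ^ 2)⁻¹ : Kˣ) : K) * d)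
    ∧ tauPerm ε d * alphaPerm u₁ v₁ w₁ * (tauPerm ε d)⁻¹
      = alphaPerm (u₁ + d * v₁ ^ 2 + d ^ ε * w₁) v₁ w₁ * gammaPerm (2 * d * v₁)
    ∧ tauPerm ε d * gammaPerm e₁ * (tauPerm ε d)⁻¹ = gammaPerm e₁ := by
  have hq : 3 * ε = Fintype.card K := by rw [hcard, hε, ← pow_succ', Nat.sub_add_cancel hr]
  have hlam : (lam : K) ^ (3 * ε) = lam := by rw [hq, FiniteField.pow_card]
  refine ⟨?_, ?_, (commute_tauPerm_gammaPerm ε d e₁).mul_inv_cancel⟩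
  · exact mul_inv_eq_iff_eq_mul.mpr (betaPerm_mul_tauPerm ε lam mu d hlam)
  · exact mul_inv_eq_iff_eq_mul.mpr (tauPerm_mul_alphaPerm ε d u₁ v₁ w₁)
end

section
/- The following hold for the subgroups of Sym(Ω): (i) E normalizes Q and E ∩ Q = 1; (ii) [T,E] = E and the conjugation action of T on E is transitive on the non-identity elements of E; (iii) [F,E] = Z; (iv) [S,E] = 1; (v) ⟨S,E,T⟩ = S × ⟨E,T⟩ internally (S and ⟨E,T⟩ commute and intersect trivially), with ⟨E,T⟩ isomorphic to the affine group F_q ⋊ F_q^× of the affine line over F_q; (vi) P = ⟨Q,E⟩ = QE with Q ∩ E = 1, and |P| = q⁵; (vii) the center Z(P) equals Z. -/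
open Equiv

variable (K : Type*) [Field K]

namespace L28

variable {K : Type*} [Field K] {ε : ℕ}

/-- Bundle of field-theoretic facts used throughout. -/
structure Good (K : Type*) [Field K] (ε : ℕ) : Prop where
  hε0 : ε ≠ 0
  hadd : ∀ x y : K, (x + y) ^ ε = x ^ ε + y ^ ε
  hq : ∀ x : K, x ^ (3 * ε) = x
  h3 : (3 : K) = 0

namespace Good

lemma h0 (hg : Good K ε) : (0 : K) ^ ε = 0 := zero_pow hg.hε0

lemma hneg (hg : Good K ε) (x : K) : (-x) ^ ε = -(x ^ ε) := by
  have := hg.hadd x (-x)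
  simp only [add_neg_cancel, hg.h0] at this
  linear_combination -this

lemma e3 (hg : Good K ε) (x : K) : (x ^ ε) ^ 3 = x := by
  rw [← pow_mul, mul_comm, hg.hq]

lemma c3 (hg : Good K ε) (x : K) : (x ^ 3) ^ ε = x := by
  rw [← pow_mul, hg.hq]

lemma einj (hg : Good K ε) {x y : K} (h : x ^ ε = y ^ ε) : x = y := by
  have := congrArg (· ^ 3) h
  simpa [hg.e3] using this

lemma u3 (hg : Good K ε) (x : Kˣ) : (x ^ ε) ^ 3 = x := by
  ext
  push_cast
  exact hg.e3 x

lemma uc3 (hg : Good K ε) (x : Kˣ) : (x ^ 3) ^ ε = x := by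
  ext
  push_cast
  exact hg.c3 x

end Good

/-- Elements of `Q = ⟨A,C⟩`. -/
def qPerm {K : Type*} [Field K] (e u v w : K) : Equiv.Perm (K × K × K) where
  toFun x := (x.1 + e * x.2.1 + u, x.2.1 + v, x.2.2 + w)
  invFun x := (x.1 - e * (x.2.1 - v) - u, x.2.1 - v, x.2.2 - w)
  left_inv x := by obtain ⟨a, b, c⟩ := x; simp; ring
  right_inv x := by obtain ⟨a, b, c⟩ := x; simp; ring

/-- Elements of `P = ⟨Q,E⟩`. -/
def pPerm {K : Type*} [Field K] (ε : ℕ) (d e u v w : K) : Equiv.Perm (K × K × K) where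
  toFun x := (x.1 + d * x.2.1 ^ 2 + e * x.2.1 + d ^ ε * x.2.2 + u, x.2.1 + v, x.2.2 + w)
  invFun x := (x.1 - d * (x.2.1 - v) ^ 2 - e * (x.2.1 - v) - d ^ ε * (x.2.2 - w) - u,
    x.2.1 - v, x.2.2 - w)
  left_inv x := by obtain ⟨a, b, c⟩ := x; simp; ring
  right_inv x := by obtain ⟨a, b, c⟩ := x; simp; ring

@[simp] lemma tau_apply (d : K) (x : K × K × K) :
    tauPerm ε d x = (x.1 + d * x.2.1 ^ 2 + d ^ ε * x.2.2, x.2.1, x.2.2) := rfl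

@[simp] lemma alpha_apply (u v w : K) (x : K × K × K) :
    alphaPerm u v w x = (x.1 + u, x.2.1 + v, x.2.2 + w) := rfl

@[simp] lemma beta_apply (l m : Kˣ) (x : K × K × K) :
    betaPerm ε l m x = ((l : K) * x.1, (m : K) * x.2.1,
      (((l * m) ^ (2 * ε) : Kˣ) : K) * x.2.2) := rfl

@[simp] lemma gamma_apply (e : K) (x : K × K × K) :
    gammaPerm e x = (x.1 + e * x.2.1, x.2.1, x.2.2) := rfl

@[simp] lemma q_apply (e u v w : K) (x : K × K × K) :
    qPerm e u v w x = (x.1 + e * x.2.1 + u, x.2.1 + v, x.2.2 + w) := rfl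

@[simp] lemma p_apply (d e u v w : K) (x : K × K × K) :
    pPerm ε d e u v w x = (x.1 + d * x.2.1 ^ 2 + e * x.2.1 + d ^ ε * x.2.2 + u,
      x.2.1 + v, x.2.2 + w) := rfl

lemma tau_mul (hg : Good K ε) (d e : K) :
    tauPerm ε d * tauPerm ε e = tauPerm ε (d + e) := by
  refine Equiv.ext fun ⟨a, b, c⟩ => ?_
  simp [Equiv.Perm.mul_apply, hg.hadd]
  ring

lemma tau_zero (hg : Good K ε) : tauPerm ε (0 : K) = 1 := by
  refine Equiv.ext fun ⟨a, b, c⟩ => ?_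
  simp [hg.h0]

lemma tau_inv (hg : Good K ε) (d : K) : (tauPerm ε d)⁻¹ = tauPerm ε (-d) := by
  refine inv_eq_of_mul_eq_one_left ?_
  rw [tau_mul hg, neg_add_cancel, tau_zero hg]

lemma alpha_mul (u v w u' v' w' : K) :
    alphaPerm u v w * alphaPerm u' v' w' = alphaPerm (u + u') (v + v') (w + w') := by
  refine Equiv.ext fun ⟨a, b, c⟩ => ?_
  simp [Equiv.Perm.mul_apply]
  constructor <;> [skip; constructor] <;> ring

lemma alpha_zero : alphaPerm (0 : K) 0 0 = 1 := by
  refine Equiv.ext fun ⟨a, b, c⟩ => ?_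
  simp

lemma alpha_inv (u v w : K) : (alphaPerm u v w)⁻¹ = alphaPerm (-u) (-v) (-w) := by
  refine inv_eq_of_mul_eq_one_left ?_
  rw [alpha_mul]
  simp [alpha_zero]

lemma gamma_mul (e e' : K) : gammaPerm e * gammaPerm e' = gammaPerm (e + e') := by
  refine Equiv.ext fun ⟨a, b, c⟩ => ?_
  simp [Equiv.Perm.mul_apply]
  ring

lemma gamma_zero : gammaPerm (0 : K) = 1 := by
  refine Equiv.ext fun ⟨a, b, c⟩ => ?_
  simp

lemma gamma_inv (e : K) : (gammaPerm e)⁻¹ = gammaPerm (-e) := by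
  refine inv_eq_of_mul_eq_one_left ?_
  rw [gamma_mul, neg_add_cancel, gamma_zero]

lemma beta_mul (l m l' m' : Kˣ) :
    betaPerm ε l m * betaPerm ε l' m' = betaPerm ε (l * l') (m * m') := by
  refine Equiv.ext fun ⟨a, b, c⟩ => ?_
  have : ((((l * l') * (m * m')) ^ (2 * ε) : Kˣ) : K)
      = (((l * m) ^ (2 * ε) : Kˣ) : K) * (((l' * m') ^ (2 * ε) : Kˣ) : K) := by
    push_cast
    ring
  simp [Equiv.Perm.mul_apply, this]
  constructor <;> [skip; constructor] <;> push_cast <;> ring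

lemma beta_one : betaPerm ε (1 : Kˣ) 1 = 1 := by
  refine Equiv.ext fun ⟨a, b, c⟩ => ?_
  simp

lemma beta_inv (l m : Kˣ) : (betaPerm ε l m)⁻¹ = betaPerm ε l⁻¹ m⁻¹ := by
  refine inv_eq_of_mul_eq_one_left ?_
  rw [beta_mul]
  simp [beta_one]

lemma q_mul (e u v w e' u' v' w' : K) :
    qPerm e u v w * qPerm e' u' v' w'
      = qPerm (e + e') (u + u' + e * v') (v + v') (w + w') := by
  refine Equiv.ext fun ⟨a, b, c⟩ => ?_
  simp [Equiv.Perm.mul_apply]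
  constructor <;> [skip; constructor] <;> ring

lemma q_zero : qPerm (0 : K) 0 0 0 = 1 := by
  refine Equiv.ext fun ⟨a, b, c⟩ => ?_
  simp

lemma q_inv (e u v w : K) :
    (qPerm e u v w)⁻¹ = qPerm (-e) (e * v - u) (-v) (-w) := by
  refine inv_eq_of_mul_eq_one_left ?_
  rw [q_mul]
  have h1 : -e + e = (0 : K) := by ring
  have h2 : e * v - u + u + -e * v = (0 : K) := by ring
  have h3 : -v + v = (0 : K) := by ring
  have h4 : -w + w = (0 : K) := by ring
  rw [h1, h2, h3, h4, q_zero]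

lemma p_mul (hg : Good K ε) (d e u v w d' e' u' v' w' : K) :
    pPerm ε d e u v w * pPerm ε d' e' u' v' w'
      = pPerm ε (d + d') (e + e' + 2 * d * v')
          (u + u' + d * v' ^ 2 + e * v' + d ^ ε * w') (v + v') (w + w') := by
  refine Equiv.ext fun ⟨a, b, c⟩ => ?_
  simp [Equiv.Perm.mul_apply, hg.hadd]
  constructor <;> [skip; constructor] <;> ring

lemma p_zero (hg : Good K ε) : pPerm ε (0 : K) 0 0 0 0 = 1 := by
  refine Equiv.ext fun ⟨a, b, c⟩ => ?_
  simp [hg.h0]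

lemma p_inv (hg : Good K ε) (d e u v w : K) :
    (pPerm ε d e u v w)⁻¹
      = pPerm ε (-d) (2 * d * v - e) (-u - d * v ^ 2 + e * v + d ^ ε * w) (-v) (-w) := by
  refine inv_eq_of_mul_eq_one_left ?_
  rw [p_mul hg]
  have h1 : -d + d = (0 : K) := by ring
  have h2 : 2 * d * v - e + e + 2 * -d * v = (0 : K) := by ring
  have h3 : -u - d * v ^ 2 + e * v + d ^ ε * w + u + -d * v ^ 2
      + (2 * d * v - e) * v + (-d) ^ ε * w = (0 : K) := by
    rw [hg.hneg]; ring
  have h4 : -v + v = (0 : K) := by ring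
  have h5 : -w + w = (0 : K) := by ring
  rw [h1, h2, h3, h4, h5, p_zero hg]

end L28

namespace L28

variable {K : Type*} [Field K] {ε : ℕ}

lemma mem_E (hg : Good K ε) {g : Equiv.Perm (K × K × K)} :
    g ∈ Egrp K ε ↔ ∃ d : K, g = tauPerm ε d := by
  constructor
  · intro h
    induction h using Subgroup.closure_induction with
    | mem x hx => exact hx
    | one => exact ⟨0, (tau_zero hg).symm⟩
    | mul x y _ _ hx hy =>
        obtain ⟨d, rfl⟩ := hx; obtain ⟨e, rfl⟩ := hy
        exact ⟨d + e, tau_mul hg d e⟩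
    | inv x _ hx =>
        obtain ⟨d, rfl⟩ := hx
        exact ⟨-d, tau_inv hg d⟩
  · rintro ⟨d, rfl⟩
    exact Subgroup.subset_closure ⟨d, rfl⟩

lemma mem_T {g : Equiv.Perm (K × K × K)} :
    g ∈ Tgrp K ε ↔ ∃ μ : Kˣ, g = betaPerm ε μ μ⁻¹ := by
  constructor
  · intro h
    induction h using Subgroup.closure_induction with
    | mem x hx => exact hx
    | one => exact ⟨1, by rw [inv_one, beta_one]⟩
    | mul x y _ _ hx hy =>
        obtain ⟨μ, rfl⟩ := hx; obtain ⟨ν, rfl⟩ := hy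
        exact ⟨μ * ν, by rw [beta_mul, mul_inv]⟩
    | inv x _ hx =>
        obtain ⟨μ, rfl⟩ := hx
        exact ⟨μ⁻¹, by rw [beta_inv, inv_inv]⟩
  · rintro ⟨μ, rfl⟩
    exact Subgroup.subset_closure ⟨μ, rfl⟩

lemma mem_S {g : Equiv.Perm (K × K × K)} :
    g ∈ Sgrp K ε ↔ ∃ μ : Kˣ, g = betaPerm ε (μ ^ 2) μ := by
  constructor
  · intro h
    induction h using Subgroup.closure_induction with
    | mem x hx => exact hx
    | one => exact ⟨1, by rw [one_pow, beta_one]⟩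
    | mul x y _ _ hx hy =>
        obtain ⟨μ, rfl⟩ := hx; obtain ⟨ν, rfl⟩ := hy
        exact ⟨μ * ν, by rw [beta_mul, mul_pow]⟩
    | inv x _ hx =>
        obtain ⟨μ, rfl⟩ := hx
        exact ⟨μ⁻¹, by rw [beta_inv, inv_pow]⟩
  · rintro ⟨μ, rfl⟩
    exact Subgroup.subset_closure ⟨μ, rfl⟩

lemma mem_F {g : Equiv.Perm (K × K × K)} :
    g ∈ Fgrp K ↔ ∃ w : K, g = alphaPerm 0 0 w := by
  constructor
  · intro h
    induction h using Subgroup.closure_induction with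
    | mem x hx => exact hx
    | one => exact ⟨0, alpha_zero.symm⟩
    | mul x y _ _ hx hy =>
        obtain ⟨w, rfl⟩ := hx; obtain ⟨w', rfl⟩ := hy
        exact ⟨w + w', by rw [alpha_mul, add_zero]⟩
    | inv x _ hx =>
        obtain ⟨w, rfl⟩ := hx
        exact ⟨-w, by rw [alpha_inv, neg_zero]⟩
  · rintro ⟨w, rfl⟩
    exact Subgroup.subset_closure ⟨w, rfl⟩

lemma mem_Z {g : Equiv.Perm (K × K × K)} :
    g ∈ Zgrp K ↔ ∃ u : K, g = alphaPerm u 0 0 := by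
  constructor
  · intro h
    induction h using Subgroup.closure_induction with
    | mem x hx => exact hx
    | one => exact ⟨0, alpha_zero.symm⟩
    | mul x y _ _ hx hy =>
        obtain ⟨u, rfl⟩ := hx; obtain ⟨u', rfl⟩ := hy
        exact ⟨u + u', by rw [alpha_mul, add_zero]⟩
    | inv x _ hx =>
        obtain ⟨u, rfl⟩ := hx
        exact ⟨-u, by rw [alpha_inv, neg_zero]⟩
  · rintro ⟨u, rfl⟩
    exact Subgroup.subset_closure ⟨u, rfl⟩

lemma alpha_eq_q (u v w : K) : alphaPerm u v w = qPerm 0 u v w := by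
  refine Equiv.ext fun ⟨a, b, c⟩ => ?_
  simp

lemma gamma_eq_q (e : K) : gammaPerm e = qPerm e 0 0 0 := by
  refine Equiv.ext fun ⟨a, b, c⟩ => ?_
  simp

lemma q_eq_gamma_alpha (e u v w : K) :
    qPerm e u v w = gammaPerm e * alphaPerm (u - e * v) v w := by
  refine Equiv.ext fun ⟨a, b, c⟩ => ?_
  simp [Equiv.Perm.mul_apply]
  ring

lemma mem_Q {g : Equiv.Perm (K × K × K)} :
    g ∈ QgrpBig K ↔ ∃ e u v w : K, g = qPerm e u v w := by
  constructor
  · intro h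
    rw [QgrpBig, Agrp, Cgrp, ← Subgroup.closure_union] at h
    induction h using Subgroup.closure_induction with
    | mem x hx =>
        rcases hx with ⟨u, v, w, rfl⟩ | ⟨e, rfl⟩
        · exact ⟨0, u, v, w, alpha_eq_q u v w⟩
        · exact ⟨e, 0, 0, 0, gamma_eq_q e⟩
    | one => exact ⟨0, 0, 0, 0, q_zero.symm⟩
    | mul x y _ _ hx hy =>
        obtain ⟨e, u, v, w, rfl⟩ := hx; obtain ⟨e', u', v', w', rfl⟩ := hy
        exact ⟨_, _, _, _, q_mul e u v w e' u' v' w'⟩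
    | inv x _ hx =>
        obtain ⟨e, u, v, w, rfl⟩ := hx
        exact ⟨_, _, _, _, q_inv e u v w⟩
  · rintro ⟨e, u, v, w, rfl⟩
    rw [q_eq_gamma_alpha]
    exact mul_mem
      (Subgroup.mem_sup_right (Subgroup.subset_closure ⟨e, rfl⟩))
      (Subgroup.mem_sup_left (Subgroup.subset_closure ⟨_, _, _, rfl⟩))

lemma alpha_eq_p (hg : Good K ε) (u v w : K) : alphaPerm u v w = pPerm ε 0 0 u v w := by
  refine Equiv.ext fun ⟨a, b, c⟩ => ?_
  simp [hg.h0]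

lemma gamma_eq_p (hg : Good K ε) (e : K) : gammaPerm e = pPerm ε 0 e 0 0 0 := by
  refine Equiv.ext fun ⟨a, b, c⟩ => ?_
  simp [hg.h0]

lemma tau_eq_p (d : K) : tauPerm ε d = pPerm ε d 0 0 0 0 := by
  refine Equiv.ext fun ⟨a, b, c⟩ => ?_
  simp

lemma q_eq_p (hg : Good K ε) (e u v w : K) : qPerm e u v w = pPerm ε 0 e u v w := by
  refine Equiv.ext fun ⟨a, b, c⟩ => ?_
  simp [hg.h0]

lemma p_eq_tau_q (hg : Good K ε) (d e u v w : K) :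
    pPerm ε d e u v w
      = tauPerm ε d * qPerm (e - 2 * d * v) (u - d * v ^ 2 - d ^ ε * w) v w := by
  refine Equiv.ext fun ⟨a, b, c⟩ => ?_
  simp [Equiv.Perm.mul_apply]
  ring

lemma mem_P (hg : Good K ε) {g : Equiv.Perm (K × K × K)} :
    g ∈ Pgrp K ε ↔ ∃ d e u v w : K, g = pPerm ε d e u v w := by
  constructor
  · intro h
    rw [Pgrp, QgrpBig, Agrp, Cgrp, Egrp, ← Subgroup.closure_union,
      ← Subgroup.closure_union] at h
    induction h using Subgroup.closure_induction with
    | mem x hx =>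
        rcases hx with (⟨u, v, w, rfl⟩ | ⟨e, rfl⟩) | ⟨d, rfl⟩
        · exact ⟨0, 0, u, v, w, alpha_eq_p hg u v w⟩
        · exact ⟨0, e, 0, 0, 0, gamma_eq_p hg e⟩
        · exact ⟨d, 0, 0, 0, 0, tau_eq_p d⟩
    | one => exact ⟨0, 0, 0, 0, 0, (p_zero hg).symm⟩
    | mul x y _ _ hx hy =>
        obtain ⟨d, e, u, v, w, rfl⟩ := hx; obtain ⟨d', e', u', v', w', rfl⟩ := hy
        exact ⟨_, _, _, _, _, p_mul hg d e u v w d' e' u' v' w'⟩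
    | inv x _ hx =>
        obtain ⟨d, e, u, v, w, rfl⟩ := hx
        exact ⟨_, _, _, _, _, p_inv hg d e u v w⟩
  · rintro ⟨d, e, u, v, w, rfl⟩
    rw [p_eq_tau_q hg]
    exact mul_mem
      (Subgroup.mem_sup_right ((mem_E hg).mpr ⟨d, rfl⟩))
      (Subgroup.mem_sup_left (mem_Q.mpr ⟨_, _, _, _, rfl⟩))

end L28

namespace L28

variable {K : Type*} [Field K] {ε : ℕ}

/-- conjugation of a `Q`-element by `τ_d`. -/
lemma tau_q_conj (hg : Good K ε) (d e u v w : K) :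
    tauPerm ε d * qPerm e u v w * (tauPerm ε d)⁻¹
      = qPerm (e + 2 * d * v) (u + d * v ^ 2 + d ^ ε * w) v w := by
  rw [tau_inv hg]
  refine Equiv.ext fun ⟨a, b, c⟩ => ?_
  simp [Equiv.Perm.mul_apply, hg.hneg]
  and_intros <;> ring

/-- `β_{μ,μ⁻¹} τ_d β⁻¹ = τ_{μ³ d}`. -/
lemma beta_tau_conj (hg : Good K ε) (μ : Kˣ) (d : K) :
    betaPerm ε μ μ⁻¹ * tauPerm ε d * (betaPerm ε μ μ⁻¹)⁻¹
      = tauPerm ε ((μ : K) ^ 3 * d) := by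
  rw [beta_inv]
  refine Equiv.ext fun ⟨a, b, c⟩ => ?_
  have h1 : (((μ : K) ^ 3 * d) : K) ^ ε = (μ : K) * d ^ ε := by
    rw [mul_pow, hg.c3]
  have hμ : (μ : K) ≠ 0 := μ.ne_zero
  simp [Equiv.Perm.mul_apply, h1]
  and_intros <;> field_simp <;> ring

/-- swap rule: `τ_d β_{ν,ν⁻¹} = β_{ν,ν⁻¹} τ_{ν⁻³ d}`. -/
lemma tau_beta_swap (hg : Good K ε) (ν : Kˣ) (d : K) :
    tauPerm ε d * betaPerm ε ν ν⁻¹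
      = betaPerm ε ν ν⁻¹ * tauPerm ε (((ν⁻¹ : Kˣ) : K) ^ 3 * d) := by
  have h := beta_tau_conj hg ν (((ν⁻¹ : Kˣ) : K) ^ 3 * d)
  have h2 : (ν : K) ^ 3 * (((ν⁻¹ : Kˣ) : K) ^ 3 * d) = d := by
    have hν : (ν : K) ≠ 0 := ν.ne_zero
    push_cast
    field_simp
  rw [h2] at h
  calc tauPerm ε d * betaPerm ε ν ν⁻¹
      = (betaPerm ε ν ν⁻¹ * tauPerm ε (((ν⁻¹ : Kˣ) : K) ^ 3 * d)
          * (betaPerm ε ν ν⁻¹)⁻¹) * betaPerm ε ν ν⁻¹ := by rw [h]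
    _ = betaPerm ε ν ν⁻¹ * tauPerm ε (((ν⁻¹ : Kˣ) : K) ^ 3 * d) := by group

/-- `β_{μ²,μ}` commutes with `τ_d`. -/
lemma s_tau_comm (hg : Good K ε) (μ : Kˣ) (d : K) :
    betaPerm ε (μ ^ 2) μ * tauPerm ε d = tauPerm ε d * betaPerm ε (μ ^ 2) μ := by
  have hu : ((μ ^ 2 * μ) ^ (2 * ε) : Kˣ) = μ ^ 2 := by
    rw [← pow_succ, mul_comm 2 ε, pow_mul, hg.uc3]
  refine Equiv.ext fun ⟨a, b, c⟩ => ?_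
  simp [Equiv.Perm.mul_apply, hu]
  and_intros <;> push_cast <;> ring

/-- `β_{μ²,μ}` commutes with `β_{ν,ν⁻¹}`. -/
lemma s_t_comm (μ ν : Kˣ) :
    betaPerm ε (μ ^ 2) μ * betaPerm ε ν ν⁻¹ = betaPerm ε ν ν⁻¹ * betaPerm ε (μ ^ 2) μ := by
  rw [beta_mul, beta_mul, mul_comm (μ ^ 2) ν, mul_comm μ ν⁻¹]

/-- members of `E ⊔ T`. -/
lemma mem_ET (hg : Good K ε) {g : Equiv.Perm (K × K × K)} :
    g ∈ Egrp K ε ⊔ Tgrp K ε ↔ ∃ (ν : Kˣ) (d : K), g = betaPerm ε ν ν⁻¹ * tauPerm ε d := by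
  constructor
  · intro h
    rw [Egrp, Tgrp, ← Subgroup.closure_union] at h
    induction h using Subgroup.closure_induction with
    | mem x hx =>
        rcases hx with ⟨d, rfl⟩ | ⟨ν, rfl⟩
        · exact ⟨1, d, by rw [inv_one, beta_one, one_mul]⟩
        · exact ⟨ν, 0, by rw [tau_zero hg, mul_one]⟩
    | one => exact ⟨1, 0, by rw [inv_one, beta_one, tau_zero hg, mul_one]⟩
    | mul x y _ _ hx hy =>
        obtain ⟨ν, d, rfl⟩ := hx; obtain ⟨ν', d', rfl⟩ := hy
        refine ⟨ν * ν', ((ν'⁻¹ : Kˣ) : K) ^ 3 * d + d', ?_⟩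
        have step : tauPerm ε d * (betaPerm ε ν' ν'⁻¹ * tauPerm ε d')
            = betaPerm ε ν' ν'⁻¹ * tauPerm ε (((ν'⁻¹ : Kˣ) : K) ^ 3 * d + d') := by
          rw [← mul_assoc, tau_beta_swap hg ν' d, mul_assoc, tau_mul hg]
        rw [mul_assoc, step, ← mul_assoc, beta_mul, mul_inv]
    | inv x _ hx =>
        obtain ⟨ν, d, rfl⟩ := hx
        refine ⟨ν⁻¹, -(((ν : Kˣ) : K) ^ 3 * d), ?_⟩
        rw [mul_inv_rev, tau_inv hg, beta_inv, tau_beta_swap hg ν⁻¹ (-d)]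
        congr 2
        push_cast [inv_inv]
        ring
  · rintro ⟨ν, d, rfl⟩
    exact mul_mem (Subgroup.mem_sup_right (mem_T.mpr ⟨ν, rfl⟩))
      (Subgroup.mem_sup_left ((mem_E hg).mpr ⟨d, rfl⟩))

end L28

namespace L28

variable {K : Type*} [Field K] {ε : ℕ}

open scoped commutatorElement

lemma two_ne (hg : Good K ε) : (2 : K) ≠ 0 := by
  intro h
  apply one_ne_zero (α := K)
  linear_combination hg.h3 - h

lemma tau_ne_one (hg : Good K ε) {d : K} (hd : tauPerm ε d ≠ 1) : d ≠ 0 := by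
  intro h
  exact hd (h ▸ tau_zero hg)

lemma cube_eq_one (hg : Good K ε) {x : K} (h : x ^ 3 = 1) : x = 1 := by
  have h1 : (x - 1) ^ 3 = 0 := by
    linear_combination h + (x - x ^ 2) * hg.h3
  have := pow_eq_zero_iff (n := 3) (by norm_num) |>.mp h1
  linear_combination this

/-- (ii) first part. -/
lemma TE_commutator (hg : Good K ε) : ⁅Tgrp K ε, Egrp K ε⁆ = Egrp K ε := by
  apply le_antisymm
  · rw [Subgroup.commutator_le]
    intro g₁ h₁ g₂ h₂
    obtain ⟨μ, rfl⟩ := mem_T.mp h₁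
    obtain ⟨d, rfl⟩ := (mem_E hg).mp h₂
    have hc : ⁅betaPerm ε μ μ⁻¹, tauPerm ε d⁆ = tauPerm ε ((μ : K) ^ 3 * d + -d) := by
      rw [commutatorElement_def, beta_tau_conj hg, tau_inv hg, tau_mul hg]
    rw [hc]
    exact (mem_E hg).mpr ⟨_, rfl⟩
  · show Subgroup.closure _ ≤ _
    rw [Subgroup.closure_le]
    rintro g ⟨d, rfl⟩
    have h := Subgroup.commutator_mem_commutator (H₁ := Tgrp K ε) (H₂ := Egrp K ε)
      (mem_T.mpr ⟨(-1 : Kˣ), rfl⟩) ((mem_E (K := K) hg).mpr ⟨d, rfl⟩)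
    have hc : ⁅betaPerm ε (-1 : Kˣ) (-1 : Kˣ)⁻¹, tauPerm ε d⁆ = tauPerm ε d := by
      rw [commutatorElement_def, beta_tau_conj hg, tau_inv hg, tau_mul hg]
      congr 1
      push_cast
      linear_combination -d * hg.h3
    rwa [hc] at h

/-- (ii) second part: transitivity. -/
lemma T_transitive (hg : Good K ε) {x y : Equiv.Perm (K × K × K)}
    (hx : x ∈ Egrp K ε) (hx1 : x ≠ 1) (hy : y ∈ Egrp K ε) (hy1 : y ≠ 1) :
    ∃ g ∈ Tgrp K ε, g * x * g⁻¹ = y := by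
  obtain ⟨d, rfl⟩ := (mem_E hg).mp hx
  obtain ⟨d', rfl⟩ := (mem_E hg).mp hy
  have hd : d ≠ 0 := tau_ne_one hg hx1
  have hd' : d' ≠ 0 := tau_ne_one hg hy1
  set μ : Kˣ := (Units.mk0 (d' / d) (div_ne_zero hd' hd)) ^ ε with hμ
  refine ⟨betaPerm ε μ μ⁻¹, mem_T.mpr ⟨μ, rfl⟩, ?_⟩
  rw [beta_tau_conj hg]
  congr 1
  have : ((μ : K)) ^ 3 = d' / d := by
    rw [hμ]
    push_cast
    exact hg.e3 _
  rw [this]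
  field_simp

/-- commutator of `F` and `E` elements. -/
lemma f_tau_commutator (hg : Good K ε) (w d : K) :
    ⁅alphaPerm 0 0 w, tauPerm ε d⁆ = alphaPerm (-(d ^ ε * w)) 0 0 := by
  rw [commutatorElement_def, tau_inv hg, alpha_inv, neg_zero]
  have hm1 : (-1 : K) ^ ε = -1 := by rw [hg.hneg]; simp
  refine Equiv.ext fun ⟨a, b, c⟩ => ?_
  simp [Equiv.Perm.mul_apply, hg.hneg, hm1]
  and_intros <;> ring

/-- (iii). -/
lemma FE_commutator (hg : Good K ε) : ⁅Fgrp K, Egrp K ε⁆ = Zgrp K := by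
  apply le_antisymm
  · rw [Subgroup.commutator_le]
    intro g₁ h₁ g₂ h₂
    obtain ⟨w, rfl⟩ := mem_F.mp h₁
    obtain ⟨d, rfl⟩ := (mem_E hg).mp h₂
    rw [f_tau_commutator hg]
    exact mem_Z.mpr ⟨_, rfl⟩
  · show Subgroup.closure _ ≤ _
    rw [Subgroup.closure_le]
    rintro g ⟨u, rfl⟩
    have h := Subgroup.commutator_mem_commutator
      (mem_F.mpr ⟨(-1 : K), rfl⟩) ((mem_E (K := K) hg).mpr ⟨u ^ 3, rfl⟩)
    have hc : ⁅alphaPerm 0 0 (-1 : K), tauPerm ε (u ^ 3)⁆ = alphaPerm u 0 0 := by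
      rw [f_tau_commutator hg]
      congr 1
      rw [hg.c3]
      ring
    rwa [hc] at h

/-- (iv). -/
lemma SE_commutator (hg : Good K ε) : ⁅Sgrp K ε, Egrp K ε⁆ = ⊥ := by
  rw [eq_bot_iff, Subgroup.commutator_le]
  intro g₁ h₁ g₂ h₂
  obtain ⟨μ, rfl⟩ := mem_S.mp h₁
  obtain ⟨d, rfl⟩ := (mem_E hg).mp h₂
  rw [Subgroup.mem_bot]
  exact commutatorElement_eq_one_iff_mul_comm.mpr (s_tau_comm hg μ d)

/-- `E ∩ Q = 1`. -/
lemma EQ_inf (hg : Good K ε) : Egrp K ε ⊓ QgrpBig K = ⊥ := by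
  rw [eq_bot_iff]
  intro g hgm
  obtain ⟨h₁, h₂⟩ := Subgroup.mem_inf.mp hgm
  obtain ⟨d, rfl⟩ := (mem_E hg).mp h₁
  obtain ⟨e, u, v, w, heq⟩ := mem_Q.mp h₂
  have h0 := DFunLike.congr_fun heq ((0 : K), (0 : K), (0 : K))
  have h1 := DFunLike.congr_fun heq ((0 : K), (0 : K), (1 : K))
  simp [Prod.ext_iff, hg.h0] at h0 h1
  obtain ⟨hu, hv, hw⟩ := h0
  have : d = 0 := by
    have hde : d ^ ε = 0 := by rw [h1.1, ← hu]
    exact hg.einj (by rw [hde, hg.h0])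
  rw [this, tau_zero hg, Subgroup.mem_bot]

lemma QE_inf (hg : Good K ε) : QgrpBig K ⊓ Egrp K ε = ⊥ := by
  rw [inf_comm]
  exact EQ_inf hg

/-- (i) first part: `E` normalizes `Q`. -/
lemma E_normalizes_Q (hg : Good K ε) :
    ∀ g ∈ Egrp K ε, ∀ x ∈ QgrpBig K, g * x * g⁻¹ ∈ QgrpBig K := by
  intro g hgE x hxQ
  obtain ⟨d, rfl⟩ := (mem_E hg).mp hgE
  obtain ⟨e, u, v, w, rfl⟩ := mem_Q.mp hxQ
  rw [tau_q_conj hg]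
  exact mem_Q.mpr ⟨_, _, _, _, rfl⟩

/-- (v) first part: `S` commutes with `⟨E,T⟩` elementwise. -/
lemma S_comm_ET (hg : Good K ε) :
    ∀ s ∈ Sgrp K ε, ∀ x ∈ Egrp K ε ⊔ Tgrp K ε, s * x = x * s := by
  intro s hs x hx
  obtain ⟨μ, rfl⟩ := mem_S.mp hs
  obtain ⟨ν, d, rfl⟩ := (mem_ET hg).mp hx
  rw [← mul_assoc, s_t_comm, mul_assoc, s_tau_comm hg, ← mul_assoc]

/-- (v) second part: `S ∩ ⟨E,T⟩ = 1`. -/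
lemma S_inf_ET (hg : Good K ε) : Sgrp K ε ⊓ (Egrp K ε ⊔ Tgrp K ε) = ⊥ := by
  rw [eq_bot_iff]
  intro g hgm
  obtain ⟨h₁, h₂⟩ := Subgroup.mem_inf.mp hgm
  obtain ⟨μ, rfl⟩ := mem_S.mp h₁
  obtain ⟨ν, d, heq⟩ := (mem_ET hg).mp h₂
  have e1 := DFunLike.congr_fun heq ((1 : K), (0 : K), (0 : K))
  have e2 := DFunLike.congr_fun heq ((0 : K), (1 : K), (0 : K))
  simp [Prod.ext_iff, Equiv.Perm.mul_apply] at e1 e2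
  -- e1 : (μ:K)^2 = ν ; e2 : (μ:K) = ν⁻¹
  have hμ3 : (μ : K) ^ 3 = 1 := by
    have : (μ : K) ^ 3 = (μ : K) ^ 2 * (μ : K) := by ring
    rw [this, e1, e2.2]
    field_simp
  have hμ1 : (μ : K) = 1 := cube_eq_one hg hμ3
  have : μ = 1 := Units.ext hμ1
  rw [this, one_pow, beta_one, Subgroup.mem_bot]

/-- (vi) decomposition. -/
lemma P_decomp (hg : Good K ε) :
    ∀ g ∈ Pgrp K ε, ∃ x ∈ QgrpBig K, ∃ y ∈ Egrp K ε, g = y * x := by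
  intro g hgP
  obtain ⟨d, e, u, v, w, rfl⟩ := (mem_P hg).mp hgP
  exact ⟨qPerm (e - 2 * d * v) (u - d * v ^ 2 - d ^ ε * w) v w,
    mem_Q.mpr ⟨_, _, _, _, rfl⟩, tauPerm ε d, (mem_E hg).mpr ⟨d, rfl⟩,
    p_eq_tau_q hg d e u v w⟩

lemma p_param_eq (hg : Good K ε) {d e u v w d' e' u' v' w' : K}
    (h : pPerm ε d e u v w = pPerm ε d' e' u' v' w') :
    d = d' ∧ e = e' ∧ u = u' ∧ v = v' ∧ w = w' := by
  have h0 := DFunLike.congr_fun h ((0 : K), (0 : K), (0 : K))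
  have h1 := congrArg Prod.fst (DFunLike.congr_fun h ((0 : K), (0 : K), (1 : K)))
  have h2 := congrArg Prod.fst (DFunLike.congr_fun h ((0 : K), (1 : K), (0 : K)))
  simp [Prod.ext_iff] at h0 h1 h2
  obtain ⟨hu, hv, hw⟩ := h0
  have hd : d = d' := hg.einj (by linear_combination h1 - hu)
  have he : e = e' := by
    linear_combination h2 - hu - hd
  exact ⟨hd, he, hu, hv, hw⟩

/-- (vi) cardinality. -/
lemma card_P (hg : Good K ε) : Nat.card (Pgrp K ε) = Nat.card K ^ 5 := by
  have bij : Function.Bijective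
      (fun z : K × K × K × K × K =>
        (⟨pPerm ε z.1 z.2.1 z.2.2.1 z.2.2.2.1 z.2.2.2.2,
          (mem_P hg).mpr ⟨_, _, _, _, _, rfl⟩⟩ : Pgrp K ε)) := by
    constructor
    · rintro ⟨d, e, u, v, w⟩ ⟨d', e', u', v', w'⟩ hz
      obtain ⟨h1, h2, h3, h4, h5⟩ := p_param_eq hg (Subtype.ext_iff.mp hz)
      simp_all
    · rintro ⟨g, hgP⟩
      obtain ⟨d, e, u, v, w, rfl⟩ := (mem_P hg).mp hgP
      exact ⟨(d, e, u, v, w), rfl⟩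
  have hc := Nat.card_eq_of_bijective _ bij
  rw [← hc]
  simp only [Nat.card_prod]
  ring

/-- `Z` is central in `P`. -/
lemma z_comm_p (hg : Good K ε) (x d e u v w : K) :
    pPerm ε d e u v w * alphaPerm x 0 0 = alphaPerm x 0 0 * pPerm ε d e u v w := by
  refine Equiv.ext fun ⟨a, b, c⟩ => ?_
  simp [Equiv.Perm.mul_apply]
  ring

/-- (vii). -/
lemma P_center (hg : Good K ε) :
    Pgrp K ε ⊓ Subgroup.centralizer (Pgrp K ε : Set (Equiv.Perm (K × K × K))) = Zgrp K := by
  apply le_antisymm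
  · intro g hgm
    obtain ⟨hP, hC⟩ := Subgroup.mem_inf.mp hgm
    obtain ⟨d, e, u, v, w, rfl⟩ := (mem_P hg).mp hP
    have hA : pPerm ε (0 : K) 0 0 1 0 ∈ Pgrp K ε := (mem_P hg).mpr ⟨_, _, _, _, _, rfl⟩
    have h1 := Subgroup.mem_centralizer_iff.mp hC _ hA
    have e1 := congrArg Prod.fst (DFunLike.congr_fun h1 ((0 : K), (0 : K), (0 : K)))
    have e2 := congrArg Prod.fst (DFunLike.congr_fun h1 ((0 : K), (1 : K), (0 : K)))
    simp [Equiv.Perm.mul_apply, hg.h0] at e1 e2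
    -- e1 : u = d + e + u (up to normalization), e2 : d + e + u = 4d + 2e + u
    have hd : d = 0 := by
      have h2d : 2 * d = 0 := by linear_combination -e1 - e2
      exact (mul_eq_zero.mp h2d).resolve_left (two_ne hg)
    have he : e = 0 := by linear_combination e1 - hd
    subst hd he
    have hT : pPerm ε (1 : K) 0 0 0 0 ∈ Pgrp K ε := (mem_P hg).mpr ⟨_, _, _, _, _, rfl⟩
    have h3 := Subgroup.mem_centralizer_iff.mp hC _ hT
    have f1 := congrArg Prod.fst (DFunLike.congr_fun h3 ((0 : K), (0 : K), (0 : K)))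
    have f2 := congrArg Prod.fst (DFunLike.congr_fun h3 ((0 : K), (1 : K), (0 : K)))
    simp [Equiv.Perm.mul_apply, hg.h0] at f1 f2
    -- f1 : v^2 + w = 0 ; f2 : (1+v)^2 + w = 1
    have hv : v = 0 := by
      have h2v : 2 * v = 0 := by linear_combination f2 - f1
      exact (mul_eq_zero.mp h2v).resolve_left (two_ne hg)
    have hw : w = 0 := by linear_combination f1 - v * hv
    subst hv hw
    exact mem_Z.mpr ⟨u, (alpha_eq_p hg u 0 0).symm⟩
  · intro g hgZ
    obtain ⟨x, rfl⟩ := mem_Z.mp hgZ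
    refine Subgroup.mem_inf.mpr ⟨(mem_P hg).mpr ⟨0, 0, x, 0, 0, alpha_eq_p hg x 0 0⟩, ?_⟩
    refine Subgroup.mem_centralizer_iff.mpr fun h hh => ?_
    obtain ⟨d, e, u, v, w, rfl⟩ := (mem_P hg).mp hh
    exact z_comm_p hg x d e u v w

end L28

namespace L28

variable {K : Type*} [Field K] {ε : ℕ}

lemma bt_mul (hg : Good K ε) (ν ν' : Kˣ) (d d' : K) :
    (betaPerm ε ν ν⁻¹ * tauPerm ε d) * (betaPerm ε ν' ν'⁻¹ * tauPerm ε d')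
      = betaPerm ε (ν * ν') (ν * ν')⁻¹
          * tauPerm ε (((ν'⁻¹ : Kˣ) : K) ^ 3 * d + d') := by
  have step : tauPerm ε d * (betaPerm ε ν' ν'⁻¹ * tauPerm ε d')
      = betaPerm ε ν' ν'⁻¹ * tauPerm ε (((ν'⁻¹ : Kˣ) : K) ^ 3 * d + d') := by
    rw [← mul_assoc, tau_beta_swap hg ν' d, mul_assoc, tau_mul hg]
  rw [mul_assoc, step, ← mul_assoc, beta_mul, mul_inv]

/-- (v) third part: `⟨E,T⟩ ≅ AGL₁(K)`. -/
lemma et_iso (hg : Good K ε) :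
    Nonempty (↥(Egrp K ε ⊔ Tgrp K ε) ≃* (K ≃ᵃ[K] K)) := by
  classical
  -- affine maps are `x ↦ x * s + t`
  have hlin : ∀ (f : K ≃ᵃ[K] K) (x : K), f.linear x = x * f.linear 1 := by
    intro f x
    conv_lhs => rw [show x = x • (1 : K) by simp]
    rw [map_smul, smul_eq_mul]
  have happ : ∀ (f : K ≃ᵃ[K] K) (x : K), f x = x * f.linear 1 + f 0 := by
    intro f x
    have h := f.map_vadd 0 x
    simpa [hlin f x] using h
  have hne : ∀ f : K ≃ᵃ[K] K, f.linear 1 ≠ 0 := by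
    intro f h
    exact one_ne_zero (f.linear.injective (a₁ := 1) (a₂ := 0) (by simpa using h))
  have hmulapp : ∀ (f g : K ≃ᵃ[K] K) (x : K), (f * g) x = f (g x) := by
    intro f g x
    rw [AffineEquiv.mul_def, AffineEquiv.trans_apply]
  have hlin1 : ∀ f g : K ≃ᵃ[K] K, (f * g).linear 1 = g.linear 1 * f.linear 1 := by
    intro f g
    have a1 := happ (f * g) 1
    rw [hmulapp f g 1, hmulapp f g 0, happ f (g 1), happ f (g 0), happ g 1, happ g 0] at a1
    linear_combination -a1
  have hzero : ∀ f g : K ≃ᵃ[K] K, (f * g) 0 = g 0 * f.linear 1 + f 0 := by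
    intro f g
    rw [hmulapp f g 0, happ f (g 0)]
  set U : (K ≃ᵃ[K] K) → Kˣ := fun f => (Units.mk0 (f.linear 1) (hne f)) ^ ε with hU
  have hUval : ∀ f : K ≃ᵃ[K] K, ((U f : Kˣ) : K) = (f.linear 1) ^ ε := by
    intro f
    rw [hU]
    push_cast
    rfl
  have hUcube : ∀ f : K ≃ᵃ[K] K, ((U f : Kˣ) : K) ^ 3 = f.linear 1 := by
    intro f
    rw [hUval]
    exact hg.e3 _
  set Ψfun : (K ≃ᵃ[K] K) → Equiv.Perm (K × K × K) :=
    fun f => betaPerm ε (U f) (U f)⁻¹ * tauPerm ε (f 0 / f.linear 1) with hΨfun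
  have hΨmul : ∀ f g : K ≃ᵃ[K] K, Ψfun (f * g) = Ψfun f * Ψfun g := by
    intro f g
    rw [hΨfun]
    simp only []
    rw [bt_mul hg]
    have hu : U (f * g) = U f * U g := by
      ext
      push_cast
      rw [hUval, hUval, hUval, hlin1, mul_pow, mul_comm]
    have hdarg : (f * g) 0 / (f * g).linear 1
        = ((U g)⁻¹ : Kˣ) ^ 3 * (f 0 / f.linear 1) + g 0 / g.linear 1 := by
      have hc : (((U g : Kˣ) : K))⁻¹ ^ 3 = (g.linear 1)⁻¹ := by
        rw [inv_pow, hUcube]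
      push_cast
      rw [hc, hzero, hlin1]
      field_simp [hne f, hne g]
      try ring
    rw [hu, hdarg]
    try push_cast
    try rfl
  have hΨone : Ψfun 1 = 1 := by
    have h1lin : (1 : K ≃ᵃ[K] K).linear 1 = 1 := by
      rw [AffineEquiv.one_def, AffineEquiv.linear_refl]
      rfl
    have h1z : (1 : K ≃ᵃ[K] K) 0 = 0 := rfl
    have hu1 : U 1 = 1 := by
      ext
      rw [hUval, h1lin, one_pow]
      rfl
    rw [hΨfun]
    simp only []
    rw [hu1, inv_one, beta_one, h1z, h1lin, zero_div, tau_zero hg, one_mul]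
  set Ψ : (K ≃ᵃ[K] K) →* Equiv.Perm (K × K × K) :=
    { toFun := Ψfun, map_one' := hΨone, map_mul' := hΨmul } with hΨ
  have hΨapp : ∀ f, Ψ f = betaPerm ε (U f) (U f)⁻¹ * tauPerm ε (f 0 / f.linear 1) := by
    intro f
    rfl
  -- injectivity
  have hinj : Function.Injective Ψ := by
    rw [injective_iff_map_eq_one]
    intro f hf
    rw [hΨapp] at hf
    have e2 := congrArg (fun z => z.2.1) (DFunLike.congr_fun hf ((0 : K), (1 : K), (0 : K)))
    have e1 := congrArg Prod.fst (DFunLike.congr_fun hf ((0 : K), (0 : K), (1 : K)))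
    simp [Equiv.Perm.mul_apply] at e1 e2
    -- e2 : ((U f)⁻¹ : K) = 1, e1 : (U f) * (f 0 / f.linear 1)^ε = 0
    have hUf1 : ((U f : Kˣ) : K) = 1 := by
      have : ((U f)⁻¹ : Kˣ) = 1 := Units.ext (by simpa using e2)
      simpa using congrArg (fun z : Kˣ => ((z⁻¹ : Kˣ) : K)) this
    have hs1 : f.linear 1 = 1 := by
      have := hUcube f
      rw [hUf1] at this
      simpa using this.symm
    have ht0 : f 0 = 0 := e1.1
    ext x
    rw [happ f x, hs1, ht0]
    simp
  -- range
  have hrange : Ψ.range = Egrp K ε ⊔ Tgrp K ε := by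
    apply le_antisymm
    · rintro g ⟨f, rfl⟩
      rw [hΨapp]
      exact (mem_ET hg).mpr ⟨U f, f 0 / f.linear 1, rfl⟩
    · apply sup_le
      · show Subgroup.closure _ ≤ _
        rw [Subgroup.closure_le]
        rintro g ⟨d, rfl⟩
        refine ⟨AffineEquiv.constVAdd K K d, ?_⟩
        have hclin : (AffineEquiv.constVAdd K K d).linear 1 = 1 := rfl
        have hc0 : (AffineEquiv.constVAdd K K d) 0 = d := by
          show d +ᵥ (0 : K) = d
          simp
        have hcu : U (AffineEquiv.constVAdd K K d) = 1 := by
          ext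
          rw [hUval, hclin, one_pow]
          rfl
        rw [hΨapp, hcu, inv_one, beta_one, hc0, hclin, div_one, one_mul]
      · show Subgroup.closure _ ≤ _
        rw [Subgroup.closure_le]
        rintro g ⟨ν, rfl⟩
        refine ⟨(LinearEquiv.smulOfUnit (ν ^ 3 : Kˣ)).toAffineEquiv, ?_⟩
        have hslin : (LinearEquiv.smulOfUnit (M := K) (ν ^ 3 : Kˣ)).toAffineEquiv.linear 1
            = ((ν : K)) ^ 3 := by
          show ((ν ^ 3 : Kˣ) : K) • (1 : K) = _
          push_cast
          simp
        have hs0 : (LinearEquiv.smulOfUnit (M := K) (ν ^ 3 : Kˣ)).toAffineEquiv 0 = 0 := by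
          show ((ν ^ 3 : Kˣ) : K) • (0 : K) = 0
          simp
        have hsu : U (LinearEquiv.smulOfUnit (M := K) (ν ^ 3 : Kˣ)).toAffineEquiv = ν := by
          ext
          rw [hUval, hslin]
          exact hg.c3 _
        rw [hΨapp, hsu, hs0, zero_div, tau_zero hg, mul_one]
  exact ⟨(MulEquiv.subgroupCongr hrange.symm).trans (MonoidHom.ofInjective hinj).symm⟩

end L28


namespace L28

lemma good_of (r : ℕ) (hr : 1 ≤ r) (K : Type*) [Field K] [Fintype K]
    (hcard : Fintype.card K = 3 ^ r) (ε : ℕ) (hε : ε = 3 ^ (r - 1)) : Good K ε := by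
  have h3ε : 3 * ε = 3 ^ r := by
    rw [hε, ← pow_succ']
    congr 1
    omega
  haveI hring : CharP K (ringChar K) := ringChar.charP K
  have hp : Nat.Prime (ringChar K) := CharP.char_is_prime K (ringChar K)
  obtain ⟨n, hpn, hcards⟩ := FiniteField.card K (ringChar K)
  have hr3 : ringChar K = 3 := by
    have hdvd : ringChar K ∣ 3 ^ r := by
      rw [← hcard, hcards]
      exact dvd_pow_self _ (by positivity)
    have := hp.dvd_of_dvd_pow hdvd
    exact (Nat.prime_dvd_prime_iff_eq hp (by norm_num)).mp this
  haveI hchar : CharP K 3 := hr3 ▸ hring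
  haveI : Fact (Nat.Prime 3) := ⟨by norm_num⟩
  refine ⟨?_, ?_, ?_, ?_⟩
  · rw [hε]
    positivity
  · intro x y
    rw [hε]
    exact add_pow_char_pow x y 3 (r - 1)
  · intro x
    rw [h3ε, ← hcard]
    exact FiniteField.pow_card x
  · exact_mod_cast (CharP.cast_eq_zero K 3)

end L28

open L28

/-- Lemma 2.8: `E` normalizes `Q` with `E ∩ Q = 1`; `[T,E] = E` and `T` is transitive on the
non-trivial elements of `E`; `[F,E] = Z`; `[S,E] = 1`; `⟨S,E,T⟩ = S × ⟨E,T⟩` with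
`⟨E,T⟩ ≅ AGL₁(q)` (the affine group of the line over `F_q`); `P = Q ⋊ E` with `|P| = q⁵`;
and `Z(P) = Z`. -/
theorem stmt9 (r : ℕ) (hr : 1 ≤ r) (K : Type*) [Field K] [Fintype K]
    (hcard : Fintype.card K = 3 ^ r) (ε : ℕ) (hε : ε = 3 ^ (r - 1)) :
    ((∀ g ∈ Egrp K ε, ∀ x ∈ QgrpBig K, g * x * g⁻¹ ∈ QgrpBig K) ∧ Egrp K ε ⊓ QgrpBig K = ⊥)
    ∧ (⁅Tgrp K ε, Egrp K ε⁆ = Egrp K ε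
      ∧ ∀ x ∈ Egrp K ε, x ≠ 1 → ∀ y ∈ Egrp K ε, y ≠ 1 → ∃ g ∈ Tgrp K ε, g * x * g⁻¹ = y)
    ∧ ⁅Fgrp K, Egrp K ε⁆ = Zgrp K
    ∧ ⁅Sgrp K ε, Egrp K ε⁆ = ⊥
    ∧ ((∀ s ∈ Sgrp K ε, ∀ x ∈ Egrp K ε ⊔ Tgrp K ε, s * x = x * s)
      ∧ Sgrp K ε ⊓ (Egrp K ε ⊔ Tgrp K ε) = ⊥
      ∧ Nonempty (↥(Egrp K ε ⊔ Tgrp K ε) ≃* (K ≃ᵃ[K] K)))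
    ∧ ((∀ g ∈ Pgrp K ε, ∃ x ∈ QgrpBig K, ∃ y ∈ Egrp K ε, g = y * x)
      ∧ QgrpBig K ⊓ Egrp K ε = ⊥ ∧ Nat.card (Pgrp K ε) = (3 ^ r) ^ 5)
    ∧ Pgrp K ε ⊓ Subgroup.centralizer (Pgrp K ε : Set (Equiv.Perm (K × K × K))) = Zgrp K := by
  have hg : Good K ε := good_of r hr K hcard ε hε
  refine ⟨⟨E_normalizes_Q hg, EQ_inf hg⟩,
    ⟨TE_commutator hg, fun x hx hx1 y hy hy1 => T_transitive hg hx hx1 hy hy1⟩,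
    FE_commutator hg, SE_commutator hg,
    ⟨S_comm_ET hg, S_inf_ET hg, et_iso hg⟩,
    ⟨P_decomp hg, QE_inf hg, ?_⟩, P_center hg⟩
  rw [card_P hg, Nat.card_eq_fintype_card, hcard]
end
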